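/- arXiv:1803.01987 — 9 statements merged into one kernel-verified Lean document; each statement's English description precedes it below -/
import Mathlib

section
/- Let $d\geq 3$ and let $m$ be an integer with $\gcd(m,d)=1$ and $d/2 < m < d$. Let $G$ be a subgroup of the symmetric group $S_d$ acting on $\{1,\dots,d\}$ such that: (i) $G$ contains a transposition, (ii) $G$ acts transitively on $\{1,\dots,d\}$, and (iii) $G$ has a subgroup $H$ that fixes every element of $\{m+1,\dots,d\}$ and acts transitively on $\{1,\dots,m\}$. Then $G = S_d$. -/
open Finset

private lemma aux_dvd {α : Type*} [DecidableEq α] (C : α → Finset α) (b : ℕ)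
    (hmem : ∀ i, i ∈ C i) (hcard : ∀ i, (C i).card = b)
    (heq : ∀ i j, j ∈ C i → C i = C j) :
    ∀ n : ℕ, ∀ S : Finset α, S.card = n → (∀ i ∈ S, C i ⊆ S) → b ∣ S.card := by
  intro n
  induction n using Nat.strong_induction_on with
  | _ n ih =>
    rintro S rfl hS
    rcases S.eq_empty_or_nonempty with rfl | ⟨i, hi⟩
    · simp
    · have hCi : C i ⊆ S := hS i hi
      have hb : b ≤ S.card := (hcard i) ▸ Finset.card_le_card hCi
      have hbpos : 0 < b := (hcard i) ▸ Finset.card_pos.2 ⟨i, hmem i⟩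
      have h1 : (S \ C i).card = S.card - b := by
        rw [Finset.card_sdiff_of_subset hCi, hcard]
      have hlt : (S \ C i).card < S.card := by omega
      have hclosed : ∀ j ∈ S \ C i, C j ⊆ S \ C i := by
        intro j hj k hk
        rcases Finset.mem_sdiff.1 hj with ⟨hjS, hjC⟩
        refine Finset.mem_sdiff.2 ⟨hS j hjS hk, fun hkC => ?_⟩
        have : C i = C j := (heq i k hkC).trans (heq j k hk).symm
        exact hjC (this ▸ hmem j)
      have hdvd := ih _ hlt (S \ C i) rfl hclosed
      rw [h1] at hdvd
      have : S.card = (S.card - b) + b := by omega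
      rw [this]
      exact Nat.dvd_add hdvd dvd_rfl

private lemma aux_card_lt (d m : ℕ) (h : m ≤ d) :
    ((Finset.univ : Finset (Fin d)).filter fun x : Fin d => (x : ℕ) < m).card = m := by
  have himg : (((Finset.univ : Finset (Fin d)).filter fun x : Fin d => (x : ℕ) < m).image Fin.val)
      = Finset.range m := by
    ext k
    simp only [Finset.mem_image, Finset.mem_filter, Finset.mem_univ, true_and, Finset.mem_range]
    constructor
    · rintro ⟨x, hx, rfl⟩; exact hx
    · intro hk; exact ⟨⟨k, lt_of_lt_of_le hk h⟩, hk, rfl⟩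
  rw [← Finset.card_image_of_injective _ Fin.val_injective, himg, Finset.card_range]

/-- **Odoni group lemma.** If `d ≥ 3`, `m` is coprime to `d` with `d/2 < m < d`, and
`G ≤ S_d` contains a transposition, acts transitively, and has a subgroup `H` fixing
every point of `{m+1,…,d}` and acting transitively on `{1,…,m}`, then `G = S_d`. -/
theorem stmt0 (d m : ℕ) (hd : 3 ≤ d) (hcop : Nat.gcd m d = 1)
    (hm1 : d < 2 * m) (hm2 : m < d)
    (G : Subgroup (Equiv.Perm (Fin d)))
    (htrans : ∃ i j : Fin d, i ≠ j ∧ Equiv.swap i j ∈ G)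
    (hGtrans : ∀ i j : Fin d, ∃ σ ∈ G, σ i = j)
    (H : Subgroup (Equiv.Perm (Fin d))) (hHG : H ≤ G)
    (hHfix : ∀ σ ∈ H, ∀ i : Fin d, m ≤ (i : ℕ) → σ i = i)
    (hHtrans : ∀ i j : Fin d, (i : ℕ) < m → (j : ℕ) < m → ∃ σ ∈ H, σ i = j) :
    G = ⊤ := by
  classical
  have hconj : ∀ g ∈ G, ∀ i j : Fin d, Equiv.swap i j ∈ G → Equiv.swap (g i) (g j) ∈ G := by
    intro g hg i j h
    rw [Equiv.swap_apply_apply]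
    exact G.mul_mem (G.mul_mem hg h) (G.inv_mem hg)
  have hrefl : ∀ i : Fin d, Equiv.swap i i ∈ G := by
    intro i
    rw [Equiv.swap_self]
    exact G.one_mem
  have hsymm : ∀ i j : Fin d, Equiv.swap i j ∈ G → Equiv.swap j i ∈ G := by
    intro i j h; rwa [Equiv.swap_comm]
  have htr : ∀ i j k : Fin d, Equiv.swap i j ∈ G → Equiv.swap j k ∈ G → Equiv.swap i k ∈ G := by
    intro i j k hij hjk
    by_cases hki : k = i
    · subst hki; exact hrefl k
    by_cases hkj : k = j
    · subst hkj; exact hij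
    have := hconj _ hij j k hjk
    rwa [Equiv.swap_apply_right, Equiv.swap_apply_of_ne_of_ne hki hkj] at this
  set C : Fin d → Finset (Fin d) :=
    fun i => Finset.univ.filter fun j => Equiv.swap i j ∈ G with hC
  have hmemiff : ∀ i j : Fin d, j ∈ C i ↔ Equiv.swap i j ∈ G := by
    intro i j; simp [hC]
  have hmemC : ∀ i : Fin d, i ∈ C i := fun i => (hmemiff i i).2 (hrefl i)
  have heqC : ∀ i j : Fin d, j ∈ C i → C i = C j := by
    intro i j hj
    rw [hmemiff] at hj
    ext k
    rw [hmemiff, hmemiff]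
    exact ⟨fun h => htr j i k (hsymm _ _ hj) h, fun h => htr i j k hj h⟩
  have himg : ∀ g ∈ G, ∀ i : Fin d, C (g i) = (C i).image g := by
    intro g hg i
    ext k
    rw [hmemiff]
    simp only [Finset.mem_image]
    constructor
    · intro h
      refine ⟨g⁻¹ k, ?_, by simp⟩
      have := hconj g⁻¹ (G.inv_mem hg) (g i) k h
      rw [hmemiff]
      simpa using this
    · rintro ⟨x, hx, rfl⟩
      exact hconj g hg i x ((hmemiff i x).1 hx)
  have hcardC : ∀ i j : Fin d, (C i).card = (C j).card := by
    intro i j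
    obtain ⟨g, hg, hgi⟩ := hGtrans i j
    rw [← hgi, himg g hg i, Finset.card_image_of_injective _ g.injective]
  obtain ⟨i0, j0, hne, hsw⟩ := htrans
  set b : ℕ := (C i0).card with hbdef
  have hcb : ∀ i : Fin d, (C i).card = b := fun i => hcardC i i0
  have hb2 : 2 ≤ b := by
    rw [hbdef]
    exact Finset.one_lt_card.2 ⟨j0, (hmemiff i0 j0).2 hsw, i0, hmemC i0, hne.symm⟩
  by_cases hcase : ∃ p q : Fin d, q ∈ C p ∧ m ≤ (p : ℕ) ∧ (q : ℕ) < m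
  · -- a class meets both sides: it is big, so there is only one class
    obtain ⟨p, q, hq, hp, hqm⟩ := hcase
    have hsub : ∀ x : Fin d, (x : ℕ) < m → x ∈ C p := by
      intro x hx
      obtain ⟨σ, hσ, hσq⟩ := hHtrans q x hqm hx
      have h1 : σ p = p := hHfix σ hσ p hp
      have h2 := hconj σ (hHG hσ) p q ((hmemiff p q).1 hq)
      rw [h1, hσq] at h2
      exact (hmemiff p x).2 h2
    have hA : (Finset.univ.filter fun x : Fin d => (x : ℕ) < m) ⊆ C p := by
      intro x hx
      exact hsub x (Finset.mem_filter.1 hx).2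
    have hpA : p ∉ (Finset.univ.filter fun x : Fin d => (x : ℕ) < m) := by
      simp; omega
    have hbig : m + 1 ≤ b := by
      have hins : insert p (Finset.univ.filter fun x : Fin d => (x : ℕ) < m) ⊆ C p :=
        Finset.insert_subset (hmemC p) hA
      have := Finset.card_le_card hins
      rwa [Finset.card_insert_of_notMem hpA, aux_card_lt d m hm2.le, hcb] at this
    have hall : ∀ i j : Fin d, Equiv.swap i j ∈ G := by
      have hEq : ∀ i : Fin d, C i = C p := by
        intro i
        by_contra hne'
        have hdisj : Disjoint (C i) (C p) := by
          rw [Finset.disjoint_left]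
          intro k hk hk'
          exact hne' ((heqC i k hk).trans (heqC p k hk').symm)
        have h2 : (C i ∪ C p).card ≤ d := by
          have := Finset.card_le_univ (C i ∪ C p)
          simpa using this
        rw [Finset.card_union_of_disjoint hdisj, hcb, hcb] at h2
        omega
      intro i j
      have : j ∈ C i := by
        rw [hEq i, ← hEq j]; exact hmemC j
      exact (hmemiff i j).1 this
    rw [eq_top_iff]
    intro f _
    exact Equiv.Perm.swap_induction_on f G.one_mem
      (fun f x y hxy ih => G.mul_mem (hall x y) ih)
  · -- classes respect the split; divisibility contradiction
    push_neg at hcase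
    have hsep : ∀ p q : Fin d, q ∈ C p → ((p : ℕ) < m ↔ (q : ℕ) < m) := by
      intro p q hq
      constructor
      · intro hpm
        by_contra hqm
        have hq' : p ∈ C q := (hmemiff q p).2 (hsymm _ _ ((hmemiff p q).1 hq))
        have := hcase q p hq' (by omega)
        omega
      · intro hqm
        by_contra hpm
        have := hcase p q hq (by omega)
        omega
    have hclosedA : ∀ i ∈ (Finset.univ.filter fun x : Fin d => (x : ℕ) < m),
        C i ⊆ (Finset.univ.filter fun x : Fin d => (x : ℕ) < m) := by
      intro i hi k hk
      simp only [Finset.mem_filter, Finset.mem_univ, true_and] at hi ⊢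
      exact (hsep i k hk).1 hi
    have hclosedB : ∀ i ∈ (Finset.univ.filter fun x : Fin d => ¬ (x : ℕ) < m),
        C i ⊆ (Finset.univ.filter fun x : Fin d => ¬ (x : ℕ) < m) := by
      intro i hi k hk
      simp only [Finset.mem_filter, Finset.mem_univ, true_and] at hi ⊢
      exact fun h => hi ((hsep i k hk).2 h)
    have hdvdA : b ∣ m := by
      have := aux_dvd C b hmemC hcb heqC _ _ rfl hclosedA
      rwa [aux_card_lt d m hm2.le] at this
    have hdvdB : b ∣ d - m := by
      have h0 := aux_dvd C b hmemC hcb heqC _ _ rfl hclosedB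
      have hsum := Finset.card_filter_add_card_filter_not
        (s := (Finset.univ : Finset (Fin d))) (p := fun x : Fin d => (x : ℕ) < m)
      rw [aux_card_lt d m hm2.le] at hsum
      simp only [Finset.card_univ, Fintype.card_fin] at hsum
      have hB : ((Finset.univ : Finset (Fin d)).filter fun x : Fin d => ¬ (x : ℕ) < m).card
          = d - m := by omega
      rwa [hB] at h0
    have hdvdd : b ∣ d := by
      have : m + (d - m) = d := by omega
      calc b ∣ m + (d - m) := Nat.dvd_add hdvdA hdvdB
        _ = d := this
    have h1 : b ∣ 1 := hcop ▸ Nat.dvd_gcd hdvdA hdvdd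
    have := Nat.dvd_one.1 h1
    omega
end

section
/- Let $G$ be a transitive subgroup of the symmetric group $S_d$, and define the equivalence relation $\sim$ on $\{1,\dots,d\}$ by $x \sim y$ iff $x=y$ or the transposition $(x\,y)\in G$. Then all equivalence classes of $\sim$ have the same cardinality, and this common cardinality divides $d$. -/
/-- For a transitive subgroup `G ≤ S_d`, all classes of the relation
`x ∼ y ↔ x = y ∨ (x y) ∈ G` have the same cardinality, which divides `d`. -/
theorem stmt2 (d : ℕ) (G : Subgroup (Equiv.Perm (Fin d)))
    (hGtrans : ∀ i j : Fin d, ∃ σ ∈ G, σ i = j) :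
    (∀ x y : Fin d,
      Nat.card {z : Fin d // x = z ∨ Equiv.swap x z ∈ G} =
        Nat.card {z : Fin d // y = z ∨ Equiv.swap y z ∈ G}) ∧
    (∀ x : Fin d, Nat.card {z : Fin d // x = z ∨ Equiv.swap x z ∈ G} ∣ d) := by
  classical
  set r : Fin d → Fin d → Prop := fun x z => x = z ∨ Equiv.swap x z ∈ G with hr
  have step : ∀ σ : Equiv.Perm (Fin d), σ ∈ G → ∀ x z : Fin d,
      r x z → r (σ x) (σ z) := by
    intro σ hσ x z h
    rcases h with h | h
    · exact Or.inl (by rw [h])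
    · refine Or.inr ?_
      rw [Equiv.swap_apply_apply]
      exact mul_mem (mul_mem hσ h) (inv_mem hσ)
  have rsymm : ∀ x z, r x z → r z x := by
    intro x z h
    rcases h with h | h
    · exact Or.inl h.symm
    · exact Or.inr (by rwa [Equiv.swap_comm])
  have rtrans : ∀ x y z, r x y → r y z → r x z := by
    intro x y z hxy hyz
    rcases hxy with rfl | h
    · exact hyz
    rcases hyz with rfl | h'
    · exact Or.inr h
    by_cases hxz : x = z
    · exact Or.inl hxz
    by_cases hyx : y = x
    · subst hyx; exact Or.inr h'
    by_cases hyz2 : y = z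
    · subst hyz2; exact Or.inr h
    have key := step (Equiv.swap x y) h y z (Or.inr h')
    have e1 : Equiv.swap x y y = x := Equiv.swap_apply_right x y
    have e2 : Equiv.swap x y z = z :=
      Equiv.swap_apply_of_ne_of_ne (Ne.symm hxz) (fun hh => hyz2 hh.symm)
    rwa [e1, e2] at key
  -- first part
  have key : ∀ x y : Fin d,
      Nat.card {z : Fin d // r x z} = Nat.card {z : Fin d // r y z} := by
    intro x y
    obtain ⟨σ, hσ, hxy⟩ := hGtrans x y
    refine Nat.card_congr ⟨fun z => ⟨σ z.1, hxy ▸ step σ hσ x z.1 z.2⟩,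
      fun z => ⟨σ⁻¹ z.1, ?_⟩, ?_, ?_⟩
    · have := step σ⁻¹ (inv_mem hσ) y z.1 z.2
      rwa [show σ⁻¹ y = x by rw [← hxy]; simp] at this
    · intro z; simp
    · intro z; simp
  refine ⟨key, ?_⟩
  intro x
  set s : Setoid (Fin d) := ⟨r, ⟨fun a => Or.inl rfl, fun h => rsymm _ _ h,
    fun h h' => rtrans _ _ _ h h'⟩⟩ with hs
  have hfib : ∀ b : Quotient s,
      Nat.card {z : Fin d // Quotient.mk s z = b} = Nat.card {z : Fin d // r x z} := by
    refine Quotient.ind ?_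
    intro w
    have hiff : ∀ z : Fin d, Quotient.mk s z = Quotient.mk s w ↔ r w z := by
      intro z
      rw [Quotient.eq]
      exact ⟨fun h => rsymm _ _ h, fun h => rsymm _ _ h⟩
    rw [show {z : Fin d // Quotient.mk s z = Quotient.mk s w} = {z : Fin d // r w z} by
      simp only [hiff]]
    exact key w x
  have hcard : d = Nat.card (Quotient s) * Nat.card {z : Fin d // r x z} := by
    calc d = Fintype.card (Fin d) := (Fintype.card_fin d).symm
    _ = Fintype.card ((b : Quotient s) × {z : Fin d // Quotient.mk s z = b}) :=
        Fintype.card_congr (Equiv.sigmaFiberEquiv (Quotient.mk s)).symm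
    _ = ∑ b : Quotient s, Fintype.card {z : Fin d // Quotient.mk s z = b} :=
        Fintype.card_sigma
    _ = ∑ _b : Quotient s, Nat.card {z : Fin d // r x z} := by
        refine Finset.sum_congr rfl fun b _ => ?_
        rw [← Nat.card_eq_fintype_card]; exact hfib b
    _ = Nat.card (Quotient s) * Nat.card {z : Fin d // r x z} := by
        simp [Nat.card_eq_fintype_card, mul_comm]
  exact ⟨Nat.card (Quotient s), by rw [mul_comm]; exact hcard⟩
end

section
/- Let $K$ be a field of characteristic zero, let $d > m \geq 1$ with $\gcd(m,d)=1$, and let $A, B, C \in K$ with $A, B \neq 0$. Let $g(x) = Ax^d + Bx^m + C$, let $\eta$ be a $(d-m)$-th root of $-mB/(dA)$ in an algebraic closure, and let $\zeta$ be a primitive $(d-m)$-th root of unity. Then $\prod_{j=1}^{d-m} g(\zeta^j \eta) = d^{-d} A^{-m}\left[ d^d A^m C^{d-m} + (-1)^{d-1}(d-m)^{d-m} m^m B^d \right]$. -/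
/-! At a nonzero critical point `x` of `g`, `d A x^(d-m) = -m B`, so `g(x) = C + ((d-m)/d) B x^m`.
As `j` runs over `1, …, d-m`, the factor `(ζ^j η)^m = (ζ^m)^j η^m` runs over `η^m` times all
`(d-m)`-th roots of unity, because `ζ^m` is again primitive when `gcd(m, d) = 1`. Hence the
product is `∏_μ (C + a μ) = C^(d-m) - (-a)^(d-m)` with `a = ((d-m)/d) B η^m`, and
`(η^m)^(d-m) = (η^(d-m))^m = (-m B/(d A))^m` makes the right-hand side explicit. -/

open Finset Polynomial

namespace IsPrimitiveRoot

variable {R : Type*} [CommRing R] [IsDomain R] {ξ : R} {n : ℕ}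

theorem prod_Icc_one_pow_eq_prod_nthRootsFinset {M : Type*} [CommMonoid M]
    (hξ : IsPrimitiveRoot ξ n) (f : R → M) :
    ∏ j ∈ Icc 1 n, f (ξ ^ j) = ∏ μ ∈ nthRootsFinset n (1 : R), f μ := by
  rcases n.eq_zero_or_pos with rfl | hn
  · simp
  refine prod_nbij (ξ ^ ·) (fun j _ => ?_) (fun i hi j hj (hij : ξ ^ i = ξ ^ j) => ?_)
    (fun μ hμ => ?_) fun _ _ => rfl
  · rw [Polynomial.mem_nthRootsFinset hn, pow_right_comm, hξ.pow_eq_one, one_pow]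
  · simp only [coe_Icc, Set.mem_Icc] at hi hj
    rw [← Nat.sub_add_cancel hi.1, ← Nat.sub_add_cancel hj.1, pow_succ, pow_succ] at hij
    have := hξ.pow_inj (by omega) (by omega) (mul_right_cancel₀ (hξ.ne_zero hn.ne') hij)
    omega
  · have : NeZero n := .of_pos hn
    obtain ⟨i, hi, rfl⟩ := hξ.eq_pow_of_pow_eq_one ((Polynomial.mem_nthRootsFinset hn 1).1 hμ)
    rcases i.eq_zero_or_pos with rfl | hi0
    · exact ⟨n, by simp; omega, by simp [hξ.pow_eq_one]⟩
    · exact ⟨i, by simp; omega, rfl⟩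

theorem prod_Icc_one_add_mul_pow (hn : 0 < n) (hξ : IsPrimitiveRoot ξ n) (c a : R) :
    ∏ j ∈ Icc 1 n, (c + a * ξ ^ j) = c ^ n - (-a) ^ n := by
  rw [hξ.pow_sub_pow_eq_prod_sub_mul _ _ hn,
    hξ.prod_Icc_one_pow_eq_prod_nthRootsFinset (fun μ => c + a * μ)]
  exact prod_congr rfl fun μ _ => by ring

end IsPrimitiveRoot

theorem trinomial_eq_of_pow_sub_eq {K : Type*} [Field K] {d m : ℕ} (hmd : m ≤ d)
    {A B C x : K} (hA : A ≠ 0) (hd : (d : K) ≠ 0)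
    (hx : x ^ (d - m) = -(m * B) / (d * A)) :
    A * x ^ d + B * x ^ m + C = C + (d - m : ℕ) / d * B * x ^ m := by
  rw [← pow_mul_pow_sub x hmd, hx, Nat.cast_sub hmd]
  field_simp
  ring

theorem stmt5_general (F : Type*) [Field F] [CharZero F] (d m : ℕ)
    (hmd : m < d) (hcop : Nat.gcd m d = 1)
    (A B C η ζ : F) (hA : A ≠ 0)
    (hη : η ^ (d - m) = -((m : F) * B) / ((d : F) * A))
    (hζ : IsPrimitiveRoot ζ (d - m)) :
    ∏ j ∈ Finset.Icc 1 (d - m),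
        (A * (ζ ^ j * η) ^ d + B * (ζ ^ j * η) ^ m + C) =
      ((d : F) ^ d)⁻¹ * (A ^ m)⁻¹ *
        ((d : F) ^ d * A ^ m * C ^ (d - m) +
          (-1) ^ (d - 1) * ((d - m : ℕ) : F) ^ (d - m) * (m : F) ^ m * B ^ d) := by
  have hd : (d : F) ≠ 0 := Nat.cast_ne_zero.2 (by omega)
  have hζm : IsPrimitiveRoot (ζ ^ m) (d - m) :=
    hζ.pow_of_coprime m ((Nat.coprime_sub_self_right hmd.le).2 hcop)
  have hcrit (j : ℕ) : A * (ζ ^ j * η) ^ d + B * (ζ ^ j * η) ^ m + C =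
      C + (d - m : ℕ) / d * B * η ^ m * (ζ ^ m) ^ j := by
    rw [trinomial_eq_of_pow_sub_eq hmd.le hA hd
      (by rw [mul_pow, pow_right_comm, hζ.pow_eq_one, one_pow, one_mul, hη])]
    ring
  have hηm : (η ^ m) ^ (d - m) = (-(m * B) / (d * A)) ^ m := by
    rw [← pow_mul, mul_comm, pow_mul, hη]
  rw [prod_congr rfl fun j _ => hcrit j, hζm.prod_Icc_one_add_mul_pow (by omega), neg_pow,
    mul_pow, hηm]
  obtain ⟨k, rfl⟩ := Nat.exists_eq_add_of_lt hmd
  rw [show m + k + 1 - m = k + 1 by omega, show m + k + 1 - 1 = m + k by omega]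
  -- Freezing the casts keeps `field_simp` from splitting `d` and `d - m` into sums.
  generalize ((m + k + 1 : ℕ) : F) = D at hd ⊢
  generalize ((k + 1 : ℕ) : F) = N
  simp only [div_pow, mul_pow]
  field_simp
  ring

/-- Product of `g(x) = Ax^d + Bx^m + C` over its nonzero critical points `ζ^j η`:
`∏_{j=1}^{d-m} g(ζ^j η) = d^{-d} A^{-m} [d^d A^m C^{d-m} + (-1)^{d-1}(d-m)^{d-m} m^m B^d]`. -/
theorem stmt5 (F : Type*) [Field F] [CharZero F] (d m : ℕ)
    (hm : 1 ≤ m) (hmd : m < d) (hcop : Nat.gcd m d = 1)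
    (A B C η ζ : F) (hA : A ≠ 0) (hB : B ≠ 0)
    (hη : η ^ (d - m) = -((m : F) * B) / ((d : F) * A))
    (hζ : IsPrimitiveRoot ζ (d - m)) :
    ∏ j ∈ Finset.Icc 1 (d - m),
        (A * (ζ ^ j * η) ^ d + B * (ζ ^ j * η) ^ m + C) =
      ((d : F) ^ d)⁻¹ * (A ^ m)⁻¹ *
        ((d : F) ^ d * A ^ m * C ^ (d - m) +
          (-1) ^ (d - 1) * ((d - m : ℕ) : F) ^ (d - m) * (m : F) ^ m * B ^ d) :=
  stmt5_general F d m hmd hcop A B C η ζ hA hη hζ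
end

section
/- Let $K$ be a field of characteristic zero, $d > m \geq 1$ with $\gcd(m,d)=1$, and $A,B,C \in K$ with $A \neq 0$. The discriminant of $g(x) = Ax^d + Bx^m + C$ equals $(-1)^{d(d-1)/2} A^{d-m-1} C^{m-1}\left[(-1)^{d-1} m^m (d-m)^{d-m} B^d + d^d A^m C^{d-m}\right]$. -/
/-!
Up to the sign `(-1)^(d(d-1)/2)`, `A^d ∏_{i<j} (α_i - α_j)^2` is `∏_i g'(α_i)`, and
`g'(x) = x^(m-1) (d A x^n + m B)` with `n = d - m`. The product of the roots is `±C/A`, and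
`∏_i (d A α_i^n + m B) = (d A)^d ∏_i (α_i^n - s)` with `s = -mB/(dA)` is, up to sign and a power
of `A`, the product of `g(β)` over the `n`-th roots `β` of `s`. At such a `β`,
`g(β) = C + (A s + B) β^m`, and as `gcd(m, n) = 1` the map `β ↦ β^m` carries the `n`-th roots of
`s` bijectively onto those of `s^m`, so that product is `C^n - (-(A s + B))^n s^m`.
-/

open Polynomial Finset

theorem Fin.prod_prod_Ioi_sub_sq {R : Type*} [CommRing R] {d : ℕ} (α : Fin d → R) :
    ∏ i, ∏ j ∈ Ioi i, (α i - α j) ^ 2 =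
      (-1) ^ (d * (d - 1) / 2) * ∏ i, ∏ j ∈ {i}ᶜ, (α i - α j) := by
  have hpairs : ∑ i : Fin d, #(Ioi i) = d * (d - 1) / 2 := by
    simp only [Fin.card_Ioi]
    rw [Fin.sum_univ_eq_sum_range (fun k => d - 1 - k), sum_range_reflect (fun k => k) d,
      sum_range_id]
  rw [← prod_prod_Ioi_mul_eq_prod_prod_off_diag (fun i j => α j - α i), ← hpairs,
    ← prod_pow_eq_pow_sum, ← prod_mul_distrib]
  refine prod_congr rfl fun i _ => ?_
  rw [← Finset.prod_const, ← prod_mul_distrib]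
  exact prod_congr rfl fun j _ => by ring

namespace Polynomial

theorem eval_derivative_prod_X_sub_C {R ι : Type*} [CommRing R] [Fintype ι] [DecidableEq ι]
    (α : ι → R) (i : ι) :
    (derivative (∏ j, (X - C (α j)))).eval (α i) = ∏ j ∈ {i}ᶜ, (α i - α j) := by
  rw [derivative_prod_finset, eval_finsetSum, sum_eq_single i]
  · simp [eval_prod, compl_eq_univ_sdiff, sdiff_singleton_eq_erase]
  · intro j _ hji
    rw [eval_mul, eval_prod, prod_eq_zero (i := i) (by simp [Ne.symm hji]) (by simp), zero_mul]
  · simp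

theorem pow_mul_prod_Ioi_sub_sq_eq_prod_eval_derivative {R : Type*} [CommRing R] {d : ℕ}
    {f : R[X]} {a : R} {α : Fin d → R} (hf : f = C a * ∏ i, (X - C (α i))) :
    a ^ d * ∏ i, ∏ j ∈ Ioi i, (α i - α j) ^ 2 =
      (-1) ^ (d * (d - 1) / 2) * ∏ i, (derivative f).eval (α i) := by
  classical
  simp only [hf, derivative_C_mul, eval_mul, eval_C, eval_derivative_prod_X_sub_C,
    prod_mul_distrib, prod_const, card_univ, Fintype.card_fin, Fin.prod_prod_Ioi_sub_sq]
  ring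

section IsAlgClosed

variable {L : Type*} [Field L] [IsAlgClosed L]

theorem _root_.IsAlgClosed.card_nthRoots (n : ℕ) (t : L) : Multiset.card (nthRoots n t) = n := by
  rw [nthRoots, IsAlgClosed.card_roots_eq_natDegree, natDegree_X_pow_sub_C]

theorem prod_nthRoots_sub {n : ℕ} (hn : n ≠ 0) (t x : L) :
    ((nthRoots n t).map (x - ·)).prod = x ^ n - t := by
  rw [nthRoots, ← (IsAlgClosed.splits _).eval_eq_prod_roots_of_monic (monic_X_pow_sub_C t hn)]
  simp

theorem prod_nthRoots_add_mul {n : ℕ} (hn : n ≠ 0) (t e c : L) :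
    ((nthRoots n t).map (e + c * ·)).prod = e ^ n - (-c) ^ n * t := by
  rcases eq_or_ne c 0 with rfl | hc
  · simp [IsAlgClosed.card_nthRoots, hn]
  · have hfac : ∀ γ, e + c * γ = -c * (-e / c - γ) := fun γ => by field_simp; ring
    simp only [hfac, Multiset.prod_map_mul, Multiset.map_const', Multiset.prod_replicate,
      IsAlgClosed.card_nthRoots, prod_nthRoots_sub hn]
    rw [mul_sub, ← mul_pow]
    field_simp

theorem nthRoots_map_pow_of_coprime {m n : ℕ} (hn : (n : L) ≠ 0) (hmn : m.Coprime n) (t : L) :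
    (nthRoots n t).map (· ^ m) = nthRoots n (t ^ m) := by
  have hn0 : 0 < n := Nat.pos_of_ne_zero (by rintro rfl; simp at hn)
  rcases eq_or_ne t 0 with rfl | ht
  · rcases eq_or_ne m 0 with rfl | hm
    · obtain rfl : n = 1 := Nat.coprime_zero_left _ |>.mp hmn
      simp only [nthRoots, pow_one, pow_zero, roots_X_sub_C, Multiset.map_singleton]
    · simp [zero_pow hm]
  have hinj : Set.InjOn (· ^ m) {β | β ^ n = t} := by
    intro β hβ γ hγ hβγ
    have hγ0 : γ ≠ 0 := by rintro rfl; exact ht (by simpa [hn0.ne'] using hγ.symm)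
    have hm1 : (β / γ) ^ m = 1 := by rw [div_pow, div_eq_one_iff_eq (pow_ne_zero _ hγ0)]; exact hβγ
    have hn1 : (β / γ) ^ n = 1 := by
      rw [div_pow, div_eq_one_iff_eq (pow_ne_zero _ hγ0)]; exact hβ.trans hγ.symm
    have := pow_gcd_eq_one.mpr ⟨hm1, hn1⟩
    rwa [hmn, pow_one, div_eq_one_iff_eq hγ0] at this
  have hnodup : ((nthRoots n t).map (· ^ m)).Nodup :=
    (nodup_roots (separable_X_pow_sub_C t hn ht)).map_on fun β hβ γ hγ =>
      hinj ((mem_nthRoots hn0).mp hβ) ((mem_nthRoots hn0).mp hγ)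
  refine Multiset.eq_of_le_of_card_le ((Multiset.le_iff_subset hnodup).mpr fun x hx => ?_)
    (by simp [IsAlgClosed.card_nthRoots])
  obtain ⟨β, hβ, rfl⟩ := Multiset.mem_map.mp hx
  rw [mem_nthRoots hn0, ← pow_mul, mul_comm, pow_mul, (mem_nthRoots hn0).mp hβ]

theorem prod_nthRoots_add_mul_pow {m n : ℕ} (hn : (n : L) ≠ 0) (hmn : m.Coprime n)
    (t e c : L) :
    ((nthRoots n t).map (fun β => e + c * β ^ m)).prod = e ^ n - (-c) ^ n * t ^ m := by
  rw [← Function.comp_def (e + c * ·) (· ^ m), ← Multiset.map_map,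
    nthRoots_map_pow_of_coprime hn hmn, prod_nthRoots_add_mul (by rintro rfl; simp at hn)]

theorem pow_mul_prod_pow_sub_eq_prod_eval_nthRoots {d n : ℕ} (hn : n ≠ 0) {f : L[X]} {a : L}
    {α : Fin d → L} (hf : f = C a * ∏ i, (X - C (α i))) (s : L) :
    a ^ n * ∏ i, (α i ^ n - s) = (-1) ^ (d * n) * ((nthRoots n s).map f.eval).prod := by
  have heval : ∀ β, a * ∏ i, (α i - β) = (-1) ^ d * f.eval β := fun β => by
    simp only [hf, eval_mul, eval_C, eval_prod, eval_sub, eval_X, ← neg_sub β, prod_neg,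
      card_univ, Fintype.card_fin]
    ring
  calc a ^ n * ∏ i, (α i ^ n - s)
      = a ^ n * ((nthRoots n s).map fun β => ∏ i, (α i - β)).prod := by
        simp_rw [← prod_nthRoots_sub hn, prod_eq_multiset_prod]
        rw [Multiset.prod_map_prod_map]
    _ = ((nthRoots n s).map fun β => a * ∏ i, (α i - β)).prod := by
        rw [Multiset.prod_map_mul, Multiset.map_const', Multiset.prod_replicate,
          IsAlgClosed.card_nthRoots]
    _ = (-1) ^ (d * n) * ((nthRoots n s).map f.eval).prod := by
        simp_rw [heval, Multiset.prod_map_mul, Multiset.map_const', Multiset.prod_replicate,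
          IsAlgClosed.card_nthRoots, pow_mul]

variable [CharZero L] {m n : ℕ} {a b e : L}

theorem prod_eval_nthRoots_trinomial (hn : n ≠ 0) (hmn : m.Coprime n) (s : L) :
    ((nthRoots n s).map (C a * X ^ (m + n) + C b * X ^ m + C e).eval).prod =
      e ^ n - (-(a * s + b)) ^ n * s ^ m := by
  rw [← prod_nthRoots_add_mul_pow (Nat.cast_ne_zero.mpr hn) hmn]
  refine congrArg _ (Multiset.map_congr rfl fun β hβ => ?_)
  rw [mem_nthRoots (Nat.pos_of_ne_zero hn)] at hβ
  simp only [eval_add, eval_mul, eval_C, eval_pow, eval_X, pow_add, hβ]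
  ring

theorem prod_trinomial_reduced_derivative (hn : n ≠ 0) (hmn : m.Coprime n) (ha : a ≠ 0)
    {α : Fin (m + n) → L}
    (hα : C a * X ^ (m + n) + C b * X ^ m + C e = C a * ∏ i, (X - C (α i))) :
    ∏ i, ((m + n : ℕ) * a * α i ^ n + m * b) = (-1) ^ ((m + n) * n) *
      ((-1) ^ (m + n - 1) * (m : L) ^ m * (n : L) ^ n * b ^ (m + n) +
        ((m + n : ℕ) : L) ^ (m + n) * a ^ m * e ^ n) := by
  obtain ⟨s, hs⟩ : ∃ s, ((m + n : ℕ) : L) * a * s = -(m * b) :=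
    ⟨-(m * b) / ((m + n : ℕ) * a), mul_div_cancel₀ _ (mul_ne_zero (by norm_cast; omega) ha)⟩
  have hQ := pow_mul_prod_pow_sub_eq_prod_eval_nthRoots hn hα s
  rw [prod_eval_nthRoots_trinomial hn hmn, neg_pow (a * s + b)] at hQ
  have hsm : ((m + n : ℕ) * a * s) ^ m = (-(m * b)) ^ m := by rw [hs]
  have hcn : ((m + n : ℕ) : L) ^ n * (a * s + b) ^ n = (n * b) ^ n := by
    rw [← mul_pow]; congr 1; push_cast at hs ⊢; linear_combination hs
  have hsgn : (-1 : L) ^ (m + n - 1) * (-1) = (-1) ^ (m + n) := pow_sub_one_mul (by omega) _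
  apply mul_left_cancel₀ (pow_ne_zero n ha)
  rw [prod_congr rfl fun i _ => (by linear_combination hs :
      ((m + n : ℕ) : L) * a * α i ^ n + m * b = (m + n : ℕ) * a * (α i ^ n - s)),
    prod_mul_distrib, prod_const, card_univ, Fintype.card_fin, mul_left_comm, hQ]
  linear_combination (-(-1) ^ n * a ^ n * ((m + n : ℕ) : L) ^ n * (a * s + b) ^ n *
      (-1) ^ ((m + n) * n)) * hsm +
    (-(-1) ^ n * a ^ n * (-(m * b)) ^ m * (-1) ^ ((m + n) * n)) * hcn +
    ((-1) ^ ((m + n) * n) * a ^ n * m ^ m * n ^ n * b ^ (m + n)) * hsgn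

end IsAlgClosed

end Polynomial

theorem trinomial_discriminant {L : Type*} [Field L] [IsAlgClosed L] [CharZero L] {d m : ℕ}
    (hm : 1 ≤ m) (hmd : m < d) (hcop : Nat.gcd m d = 1) {a b e : L} (ha : a ≠ 0)
    {α : Fin d → L} (hα : C a * X ^ d + C b * X ^ m + C e = C a * ∏ i, (X - C (α i))) :
    a ^ (2 * d - 2) * ∏ i, ∏ j ∈ Ioi i, (α i - α j) ^ 2 =
      (-1) ^ (d * (d - 1) / 2) * a ^ (d - m - 1) * e ^ (m - 1) *
        ((-1) ^ (d - 1) * (m : L) ^ m * ((d - m : ℕ) : L) ^ (d - m) * b ^ d +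
          (d : L) ^ d * a ^ m * e ^ (d - m)) := by
  obtain ⟨n, rfl⟩ : ∃ n, d = m + n := ⟨d - m, by omega⟩
  rw [Nat.add_sub_cancel_left]
  have hmn : m.Coprime n := Nat.coprime_add_self_right.mp (by rwa [add_comm])
  have hderiv : ∀ x : L, (derivative (C a * X ^ (m + n) + C b * X ^ m + C e)).eval x =
      x ^ (m - 1) * ((m + n : ℕ) * a * x ^ n + m * b) := by
    intro x
    have hx : x ^ (m + n - 1) = x ^ (m - 1) * x ^ n := by rw [← pow_add]; congr 1; omega
    simp only [derivative_add, derivative_C_mul, derivative_X_pow, derivative_C, eval_add,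
      eval_mul, eval_C, eval_pow, eval_X, add_zero, hx]
    ring
  have hprod : e = a * ((-1) ^ (m + n) * ∏ i, α i) := by
    simpa [eval_prod, zero_pow (show m + n ≠ 0 by omega), zero_pow (show m ≠ 0 by omega),
      prod_neg] using congrArg (eval 0) hα
  have hsign : (-1 : L) ^ ((m + n) * n) = (-1) ^ ((m + n) * (m - 1)) :=
    neg_one_pow_congr <| Nat.even_add.mp <| by
      rw [← mul_add, show n + (m - 1) = m + n - 1 by omega]; exact Nat.even_mul_pred_self _
  have hdisc := pow_mul_prod_Ioi_sub_sq_eq_prod_eval_derivative hα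
  rw [prod_congr rfl fun i _ => hderiv (α i), prod_mul_distrib, prod_pow univ (m - 1) α,
    prod_trinomial_reduced_derivative (by omega) hmn ha hα, hsign] at hdisc
  rw [show 2 * (m + n) - 2 = m - 1 + (n - 1) + (m + n) by omega, pow_add, pow_add,
    mul_assoc (_ * _) (a ^ (m + n)), hdisc, hprod]
  ring

/-- The discriminant of the trinomial `g(x) = Ax^d + Bx^m + C` (with `gcd(m,d)=1`,
`d > m ≥ 1`, `A ≠ 0`, char 0) equals
`(-1)^{d(d-1)/2} A^{d-m-1} C^{m-1} [(-1)^{d-1} m^m (d-m)^{d-m} B^d + d^d A^m C^{d-m}]`.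
Here the discriminant of a degree-`d` polynomial with leading coefficient `A` and roots
`α_1,…,α_d` (with multiplicity, in an algebraic closure) is
`A^{2d-2} ∏_{i<j} (α_i - α_j)^2`. -/
theorem stmt6 (K : Type*) [Field K] [CharZero K] (d m : ℕ)
    (hm : 1 ≤ m) (hmd : m < d) (hcop : Nat.gcd m d = 1)
    (A B C₀ : K) (hA : A ≠ 0)
    (α : Fin d → AlgebraicClosure K)
    (hroots : (Polynomial.C A * X ^ d + Polynomial.C B * X ^ m + Polynomial.C C₀).map
        (algebraMap K (AlgebraicClosure K)) =
      Polynomial.C (algebraMap K (AlgebraicClosure K) A) *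
        ∏ i : Fin d, (X - Polynomial.C (α i))) :
    (algebraMap K (AlgebraicClosure K) A) ^ (2 * d - 2) *
        ∏ i : Fin d, ∏ j ∈ Finset.Ioi i, (α i - α j) ^ 2 =
      algebraMap K (AlgebraicClosure K)
        ((-1) ^ (d * (d - 1) / 2) * A ^ (d - m - 1) * C₀ ^ (m - 1) *
          ((-1) ^ (d - 1) * (m : K) ^ m * ((d - m : ℕ) : K) ^ (d - m) * B ^ d +
            (d : K) ^ d * A ^ m * C₀ ^ (d - m))) := by
  simp only [Polynomial.map_add, Polynomial.map_mul, Polynomial.map_pow, map_C, map_X]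
    at hroots
  rw [trinomial_discriminant hm hmd hcop ((_root_.map_ne_zero _).mpr hA) hroots]
  simp only [map_mul, map_add, map_pow, map_neg, map_one, map_natCast]
end

section
/- Let $p$ be a prime, $d > m \geq 1$ with $\gcd(m,d)=1$ and $p \nmid md(d-m)$, and let $A, B, C \in \mathbb{F}_p$ be nonzero. Then $g(x) = Ax^d + Bx^m + C$ has at most one multiple root in an algebraic closure of $\mathbb{F}_p$, and any multiple root has multiplicity exactly $2$. -/
open Polynomial

private lemma pow_eq_pow_inj {K : Type*} [Field K] {x y : K} (hx : x ≠ 0) (hy : y ≠ 0)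
    {m n : ℕ} (hcop : Nat.gcd m n = 1) (h1 : x ^ m = y ^ m) (h2 : x ^ n = y ^ n) : x = y := by
  have ht : ∀ k : ℕ, x ^ k = y ^ k → (x * y⁻¹) ^ k = 1 := by
    intro k hk
    rw [mul_pow, inv_pow, hk, mul_inv_cancel₀ (pow_ne_zero _ hy)]
  have hdvd : orderOf (x * y⁻¹) ∣ Nat.gcd m n :=
    Nat.dvd_gcd (orderOf_dvd_of_pow_eq_one (ht m h1)) (orderOf_dvd_of_pow_eq_one (ht n h2))
  rw [hcop, Nat.dvd_one, orderOf_eq_one_iff] at hdvd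
  field_simp at hdvd
  exact hdvd

private lemma key_aux {K : Type*} [Field K] (d m : ℕ) (hm : 1 ≤ m) (hmd : m < d)
    (hcop : Nat.gcd m d = 1) (a b c : K) (ha : a ≠ 0) (hb : b ≠ 0) (hc : c ≠ 0)
    (hdK : (d : K) ≠ 0) (hmK : (m : K) ≠ 0) (hdmK : ((d - m : ℕ) : K) ≠ 0) :
    (∀ x y : K, 2 ≤ (C a * X ^ d + C b * X ^ m + C c).rootMultiplicity x →
      2 ≤ (C a * X ^ d + C b * X ^ m + C c).rootMultiplicity y → x = y) ∧
    (∀ x : K, 2 ≤ (C a * X ^ d + C b * X ^ m + C c).rootMultiplicity x →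
      (C a * X ^ d + C b * X ^ m + C c).rootMultiplicity x = 2) := by
  set g : K[X] := C a * X ^ d + C b * X ^ m + C c with hg
  set h : K[X] := C (a * d) * X ^ (d - m) + C (b * m) with hh
  have hg0 : g ≠ 0 := by
    intro h0
    have := congrArg (eval 0) h0
    simp [hg, zero_pow (by omega : d ≠ 0), zero_pow (by omega : m ≠ 0)] at this
    exact hc this
  have hh0 : h ≠ 0 := by
    intro h0
    have := congrArg (eval 0) h0
    simp [hh, zero_pow (by omega : d - m ≠ 0)] at this
    tauto
  have hderiv : derivative g = h * X ^ (m - 1) := by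
    rw [hg, hh]
    simp only [derivative_add, derivative_mul, derivative_C, derivative_X_pow, zero_mul, zero_add,
      add_zero]
    rw [show d - 1 = (d - m) + (m - 1) by omega, pow_add]
    simp only [C_mul]
    ring
  have hderiv0 : derivative g ≠ 0 := by
    rw [hderiv]; exact mul_ne_zero hh0 (pow_ne_zero _ X_ne_zero)
  -- facts about any multiple root
  have facts : ∀ x : K, 2 ≤ g.rootMultiplicity x →
      x ≠ 0 ∧ b * ((d : K) - m) * x ^ m = -(c * d) ∧ a * d * x ^ (d - m) = -(b * m) := by
    intro x hx
    have hroot : g.eval x = 0 := (rootMultiplicity_pos hg0).mp (by omega)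
    have hx0 : x ≠ 0 := by
      rintro rfl
      simp [hg, zero_pow (by omega : d ≠ 0), zero_pow (by omega : m ≠ 0)] at hroot
      exact hc hroot
    have hd1 : 1 ≤ (derivative g).rootMultiplicity x := by
      have := rootMultiplicity_sub_one_le_derivative_rootMultiplicity_of_ne_zero g x hderiv0
      omega
    have hroot' : (derivative g).eval x = 0 := (rootMultiplicity_pos hderiv0).mp (by omega)
    rw [hderiv, eval_mul] at hroot'
    have hhx : h.eval x = 0 := by
      rcases mul_eq_zero.mp hroot' with h1 | h1
      · exact h1
      · exact absurd h1 (by simpa using pow_ne_zero (m-1) hx0)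
    have eq1 : a * d * x ^ (d - m) = -(b * m) := by
      simp only [hh, eval_add, eval_mul, eval_C, eval_pow, eval_X] at hhx
      linear_combination hhx
    refine ⟨hx0, ?_, eq1⟩
    have hge : a * x ^ d + b * x ^ m + c = 0 := by
      simpa [hg] using hroot
    have hxd : x ^ d = x ^ (d - m) * x ^ m := by
      rw [← pow_add]; congr 1; omega
    rw [hxd] at hge
    linear_combination (d : K) * hge - x ^ m * eq1
  have hdm' : (d : K) - m ≠ 0 := by rwa [Nat.cast_sub hmd.le] at hdmK
  constructor
  · intro x y hx hy
    obtain ⟨hx0, hx1, hx2⟩ := facts x hx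
    obtain ⟨hy0, hy1, hy2⟩ := facts y hy
    have hxm : x ^ m = y ^ m :=
      mul_left_cancel₀ (mul_ne_zero hb hdm') (by rw [hx1, hy1])
    have hxdm : x ^ (d - m) = y ^ (d - m) :=
      mul_left_cancel₀ (mul_ne_zero ha hdK) (by rw [hx2, hy2])
    exact pow_eq_pow_inj hx0 hy0 (by rw [Nat.gcd_sub_self_right hmd.le]; exact hcop) hxm hxdm
  · intro x hx
    obtain ⟨hx0, -, -⟩ := facts x hx
    have hhd : derivative h = C (a * d) * (C ((d - m : ℕ) : K) * X ^ (d - m - 1)) := by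
      simp [hh, derivative_X_pow]
    have hev : (derivative h).eval x ≠ 0 := by
      rw [hhd]
      simp only [eval_mul, eval_C, eval_pow, eval_X]
      exact mul_ne_zero (mul_ne_zero ha hdK) (mul_ne_zero hdmK (pow_ne_zero _ hx0))
    have hhd0 : derivative h ≠ 0 := by
      intro h0; rw [h0] at hev; simp at hev
    have h4 : rootMultiplicity x h ≤ 1 := by
      have h5 := rootMultiplicity_sub_one_le_derivative_rootMultiplicity_of_ne_zero h x hhd0
      have h6 : rootMultiplicity x (derivative h) = 0 :=
        rootMultiplicity_eq_zero hev
      omega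
    have h2 : (derivative g).rootMultiplicity x ≤ 1 := by
      rw [hderiv, rootMultiplicity_mul (mul_ne_zero hh0 (pow_ne_zero _ X_ne_zero))]
      have h3 : rootMultiplicity x (X ^ (m - 1) : K[X]) = 0 :=
        rootMultiplicity_eq_zero (by simp [IsRoot, pow_ne_zero _ hx0])
      omega
    have h1 := rootMultiplicity_sub_one_le_derivative_rootMultiplicity_of_ne_zero g x hderiv0
    omega

/-- Over `𝔽_p` with `p ∤ md(d-m)`, `gcd(m,d)=1`, `d > m ≥ 1`, and `A,B,C ≠ 0`,
`g(x) = Ax^d + Bx^m + C` has at most one multiple root in an algebraic closure,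
and any multiple root has multiplicity exactly `2`. -/
theorem stmt8 (p : ℕ) [Fact p.Prime] (d m : ℕ) (hm : 1 ≤ m) (hmd : m < d)
    (hcop : Nat.gcd m d = 1) (hp : ¬ p ∣ m * d * (d - m))
    (A B C₀ : ZMod p) (hA : A ≠ 0) (hB : B ≠ 0) (hC : C₀ ≠ 0) :
    (∀ x y : AlgebraicClosure (ZMod p),
      2 ≤ ((Polynomial.C A * X ^ d + Polynomial.C B * X ^ m + Polynomial.C C₀).map
        (algebraMap (ZMod p) (AlgebraicClosure (ZMod p)))).rootMultiplicity x →
      2 ≤ ((Polynomial.C A * X ^ d + Polynomial.C B * X ^ m + Polynomial.C C₀).map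
        (algebraMap (ZMod p) (AlgebraicClosure (ZMod p)))).rootMultiplicity y →
      x = y) ∧
    (∀ x : AlgebraicClosure (ZMod p),
      2 ≤ ((Polynomial.C A * X ^ d + Polynomial.C B * X ^ m + Polynomial.C C₀).map
        (algebraMap (ZMod p) (AlgebraicClosure (ZMod p)))).rootMultiplicity x →
      ((Polynomial.C A * X ^ d + Polynomial.C B * X ^ m + Polynomial.C C₀).map
        (algebraMap (ZMod p) (AlgebraicClosure (ZMod p)))).rootMultiplicity x = 2) := by
  set K := AlgebraicClosure (ZMod p)
  set φ := algebraMap (ZMod p) K with hφ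
  have hinj : Function.Injective φ := φ.injective
  have hmap : (Polynomial.C A * X ^ d + Polynomial.C B * X ^ m + Polynomial.C C₀).map φ
      = Polynomial.C (φ A) * X ^ d + Polynomial.C (φ B) * X ^ m + Polynomial.C (φ C₀) := by
    simp [Polynomial.map_add, Polynomial.map_mul, Polynomial.map_pow]
  have hpm : ¬ p ∣ m := fun h => hp ((h.mul_right d).mul_right _)
  have hpd : ¬ p ∣ d := fun h => hp ((h.mul_left m).mul_right _)
  have hpdm : ¬ p ∣ (d - m) := fun h => hp (h.mul_left (m * d))
  have cast_ne : ∀ n : ℕ, ¬ p ∣ n → (n : K) ≠ 0 := by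
    intro n hn h0
    have h1 : (n : ZMod p) = 0 := by
      apply hinj; rw [map_natCast, map_zero]; exact h0
    exact hn ((ZMod.natCast_eq_zero_iff n p).mp h1)
  rw [hmap]
  exact key_aux d m hm hmd hcop (φ A) (φ B) (φ C₀)
    ((map_ne_zero_iff φ hinj).mpr hA) ((map_ne_zero_iff φ hinj).mpr hB)
    ((map_ne_zero_iff φ hinj).mpr hC) (cast_ne d hpd) (cast_ne m hpm) (cast_ne (d - m) hpdm)
end

section
/- Let $K$ be a field complete with respect to a discrete valuation $v$ normalized so $v(K^\times) = \mathbb{Z}$, let $d > m \geq 2$ with $\gcd(m,d)=1$, and let $b, \beta \in K$ with $v(b) < \min\{v(\beta), 0\}$, $(d-m) \mid v(b)$, and $\gcd(m, v(\beta) - v(b)) = 1$. Then the Newton polygon of $f(x) - \beta = x^d - bx^m - \beta$ has exactly two segments: one of length $m$ with slope $-(v(\beta) - v(b))/m$, and one of length $d-m$ with slope $-v(b)/(d-m)$. -/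
open Polynomial

/-- `N` is the Newton polygon (lower convex hull of the points `(i, val i)`, `0 ≤ i ≤ dd`)
of a polynomial of degree `dd` whose coefficient valuations are given by `val`
(`val i = ⊤` when the coefficient vanishes). -/
def IsNewtonPolygon (dd : ℕ) (val : ℕ → WithTop ℚ) (N : ℚ → ℚ) : Prop :=
  ConvexOn ℚ (Set.Icc (0 : ℚ) dd) N ∧
  (∀ i : ℕ, i ≤ dd → ((N i : ℚ) : WithTop ℚ) ≤ val i) ∧
  ∀ M : ℚ → ℚ, ConvexOn ℚ (Set.Icc (0 : ℚ) dd) M →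
    (∀ i : ℕ, i ≤ dd → ((M i : ℚ) : WithTop ℚ) ≤ val i) →
    ∀ x ∈ Set.Icc (0 : ℚ) dd, M x ≤ N x

theorem affine_convexOn (s : Set ℚ) (hs : Convex ℚ s) (a c : ℚ) :
    ConvexOn ℚ s (fun x => a + c * x) := by
  refine ⟨hs, ?_⟩
  intro x _ y _ p q hp hq hpq
  simp only [smul_eq_mul]
  have h : p * (a + c * x) + q * (a + c * y) = a + c * (p * x + q * y) := by
    linear_combination a * hpq
  linarith

set_option maxHeartbeats 1600000 in
/-- Let `v` be a discrete (additive) valuation on a field `K`, normalized so that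
`v(K^×) = ℤ`, and let `b, β ∈ K` with `v(b) < min{v(β), 0}`, `(d-m) ∣ v(b)`, and
`gcd(m, v(β) - v(b)) = 1`, where `d > m ≥ 2` and `gcd(m,d) = 1`.  Then the Newton
polygon of `x^d - b x^m - β` consists of exactly two segments: one of length `m` with
slope `-(v(β) - v(b))/m`, and one of length `d - m` with slope `-v(b)/(d-m)`. -/
theorem stmt10 (K : Type*) [Field K] (v : AddValuation K (WithTop ℤ))
    (hsurj : ∀ n : ℤ, ∃ x : K, v x = (n : WithTop ℤ))
    (d m : ℕ) (hm : 2 ≤ m) (hmd : m < d) (hcop : Nat.gcd m d = 1)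
    (b β : K) (vb vβ : ℤ) (hvb : v b = (vb : WithTop ℤ)) (hvβ : v β = (vβ : WithTop ℤ))
    (h1 : vb < min vβ 0) (h2 : ((d : ℤ) - (m : ℤ)) ∣ vb)
    (h3 : Int.gcd (m : ℤ) (vβ - vb) = 1) :
    ∃ N : ℚ → ℚ,
      IsNewtonPolygon d
        (fun i => ((v ((X ^ d - Polynomial.C b * X ^ m - Polynomial.C β).coeff i)).map
          (fun z : ℤ => (z : ℚ)))) N ∧
      (∀ x ∈ Set.Icc (0 : ℚ) (m : ℚ),
        N x = (vβ : ℚ) + (-(((vβ : ℚ) - (vb : ℚ)) / (m : ℚ))) * x) ∧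
      (∀ x ∈ Set.Icc (m : ℚ) (d : ℚ),
        N x = (vb : ℚ) + (-((vb : ℚ) / ((d : ℚ) - (m : ℚ)))) * (x - (m : ℚ))) ∧
      (-(((vβ : ℚ) - (vb : ℚ)) / (m : ℚ))) < (-((vb : ℚ) / ((d : ℚ) - (m : ℚ)))) := by
  -- coefficient computations
  have hc0 : (X ^ d - Polynomial.C b * X ^ m - Polynomial.C β).coeff 0 = -β := by
    have ha : ¬ (0:ℕ) = d := by omega
    have hb' : ¬ (0:ℕ) = m := by omega
    simp [coeff_X_pow, coeff_C, ha, hb']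
  have hcm : (X ^ d - Polynomial.C b * X ^ m - Polynomial.C β).coeff m = -b := by
    have ha : ¬ (m:ℕ) = d := by omega
    have hb' : ¬ (m:ℕ) = 0 := by omega
    simp [coeff_X_pow, coeff_C, ha, hb']
  have hcd : (X ^ d - Polynomial.C b * X ^ m - Polynomial.C β).coeff d = 1 := by
    have ha : ¬ (d:ℕ) = m := by omega
    have hb' : ¬ (d:ℕ) = 0 := by omega
    simp [coeff_X_pow, coeff_C, ha, hb']
  have hmap1 : (v ((1:K))).map (fun z : ℤ => (z : ℚ)) = ((0:ℚ) : WithTop ℚ) := by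
    rw [v.map_one, show (0 : WithTop ℤ) = ((0:ℤ) : WithTop ℤ) from rfl, WithTop.map_coe]
    norm_num
  set qb : ℚ := (vb : ℚ) with hqb
  set qβ : ℚ := (vβ : ℚ) with hqβ
  have hmQ : (0 : ℚ) < (m : ℚ) := by exact_mod_cast Nat.lt_of_lt_of_le Nat.zero_lt_two hm
  have hdmQ : (0 : ℚ) < (d : ℚ) - (m : ℚ) := by
    have : (m : ℚ) < (d : ℚ) := by exact_mod_cast hmd
    linarith
  have hqb0 : qb < 0 := by
    rw [hqb]
    exact_mod_cast lt_of_lt_of_le h1 (min_le_right _ _)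
  have hqbβ : qb < qβ := by
    rw [hqb, hqβ]
    exact_mod_cast lt_of_lt_of_le h1 (min_le_left _ _)
  set s₁ : ℚ := -((qβ - qb) / (m : ℚ)) with hs₁
  set s₂ : ℚ := -(qb / ((d : ℚ) - (m : ℚ))) with hs₂
  have hs₁neg : s₁ < 0 := by
    rw [hs₁, neg_lt, neg_zero]
    exact div_pos (by linarith) hmQ
  have hs₂pos : 0 < s₂ := by
    rw [hs₂, lt_neg, neg_zero]
    exact div_neg_of_neg_of_pos hqb0 hdmQ
  have hs : s₁ < s₂ := hs₁neg.trans hs₂pos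
  have keym : qβ + s₁ * (m : ℚ) = qb := by
    rw [hs₁]; field_simp; ring
  have keyd : qb + s₂ * ((d : ℚ) - (m : ℚ)) = 0 := by
    rw [hs₂]; field_simp; ring
  set L₁ : ℚ → ℚ := fun x => qβ + s₁ * x with hL₁
  set L₂ : ℚ → ℚ := fun x => (qb - s₂ * (m : ℚ)) + s₂ * x with hL₂
  have hL12 : ∀ x : ℚ, x ≤ (m : ℚ) → L₂ x ≤ L₁ x := by
    intro x hx
    simp only [hL₁, hL₂]
    nlinarith [mul_nonneg (sub_pos.2 hs).le (sub_nonneg.2 hx), keym]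
  have hL21 : ∀ x : ℚ, (m : ℚ) ≤ x → L₁ x ≤ L₂ x := by
    intro x hx
    simp only [hL₁, hL₂]
    nlinarith [mul_nonneg (sub_pos.2 hs).le (sub_nonneg.2 hx), keym]
  have hmd' : (m : ℚ) ≤ (d : ℚ) := by exact_mod_cast hmd.le
  refine ⟨fun x => L₁ x ⊔ L₂ x, ⟨?_, ?_, ?_⟩, ?_, ?_, ?_⟩
  · exact (affine_convexOn _ (convex_Icc _ _) qβ s₁).sup
      (affine_convexOn _ (convex_Icc _ _) (qb - s₂ * (m : ℚ)) s₂)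
  · intro i hi
    show ((L₁ (i : ℚ) ⊔ L₂ (i : ℚ) : ℚ) : WithTop ℚ) ≤
      (v ((X ^ d - Polynomial.C b * X ^ m - Polynomial.C β).coeff i)).map
        (fun z : ℤ => (z : ℚ))
    by_cases hi0 : i = 0
    · subst hi0
      rw [hc0, v.map_neg, hvβ, WithTop.map_coe, Nat.cast_zero, WithTop.coe_le_coe]
      refine sup_le ?_ ?_
      · show qβ + s₁ * 0 ≤ qβ; nlinarith
      · show (qb - s₂ * (m : ℚ)) + s₂ * 0 ≤ qβ
        nlinarith [mul_pos hs₂pos hmQ]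
    · by_cases him : i = m
      · rw [him, hcm, v.map_neg, hvb, WithTop.map_coe, WithTop.coe_le_coe]
        refine sup_le ?_ ?_
        · show qβ + s₁ * (m : ℚ) ≤ qb; linarith [keym]
        · show (qb - s₂ * (m : ℚ)) + s₂ * (m : ℚ) ≤ qb; linarith
      · by_cases hid : i = d
        · rw [hid, hcd, hmap1, WithTop.coe_le_coe]
          refine sup_le ?_ ?_
          · calc L₁ (d : ℚ) ≤ L₂ (d : ℚ) := hL21 _ hmd'
              _ ≤ 0 := by
                show (qb - s₂ * (m : ℚ)) + s₂ * (d : ℚ) ≤ 0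
                nlinarith [keyd]
          · show (qb - s₂ * (m : ℚ)) + s₂ * (d : ℚ) ≤ 0
            nlinarith [keyd]
        · have hc : (X ^ d - Polynomial.C b * X ^ m - Polynomial.C β).coeff i = 0 := by
            have h0' : ¬ i = 0 := hi0
            have h1' : ¬ i = m := him
            have h2' : ¬ i = d := hid
            simp [coeff_X_pow, coeff_C, h0', h1', h2', Ne.symm h1', Ne.symm h2',
              (fun h => h0' h.symm : ¬ 0 = i)]
          rw [hc, v.map_zero, WithTop.map_top]
          exact le_top
  · intro M hMc hMval x hx
    have hM0 : M 0 ≤ qβ := by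
      have h := hMval 0 (by omega)
      simp only [hc0, AddValuation.map_neg, hvβ, WithTop.map_coe, Nat.cast_zero] at h
      exact_mod_cast h
    have hMm : M (m : ℚ) ≤ qb := by
      have h := hMval m hmd.le
      simp only [hcm, AddValuation.map_neg, hvb, WithTop.map_coe] at h
      exact_mod_cast h
    have hMd : M (d : ℚ) ≤ 0 := by
      have h := hMval d le_rfl
      simp only [hcd, hmap1] at h
      exact_mod_cast h
    obtain ⟨hx0, hxd⟩ := hx
    show M x ≤ L₁ x ⊔ L₂ x
    by_cases hxm : x ≤ (m : ℚ)
    · set p : ℚ := ((m : ℚ) - x) / (m : ℚ) with hp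
      set q : ℚ := x / (m : ℚ) with hq
      have hp0 : 0 ≤ p := div_nonneg (by linarith) hmQ.le
      have hq0 : 0 ≤ q := div_nonneg hx0 hmQ.le
      have hpq : p + q = 1 := by
        rw [hp, hq, ← add_div, show (m : ℚ) - x + x = (m : ℚ) by ring,
          div_self hmQ.ne']
      have hcomb := hMc.2 (Set.mem_Icc.2 ⟨le_refl (0:ℚ), by positivity⟩)
        (Set.mem_Icc.2 ⟨hmQ.le, hmd'⟩) hp0 hq0 hpq
      simp only [smul_eq_mul, mul_zero, zero_add] at hcomb
      have hqm : q * (m : ℚ) = x := by rw [hq]; field_simp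
      rw [hqm] at hcomb
      have hle : M x ≤ p * qβ + q * qb :=
        hcomb.trans (add_le_add (mul_le_mul_of_nonneg_left hM0 hp0)
          (mul_le_mul_of_nonneg_left hMm hq0))
      have heq : p * qβ + q * qb = L₁ x := by
        show _ = qβ + s₁ * x
        rw [hp, hq, hs₁]
        field_simp
        ring
      exact le_trans (heq ▸ hle) le_sup_left
    · push_neg at hxm
      set p : ℚ := ((d : ℚ) - x) / ((d : ℚ) - (m : ℚ)) with hp
      set q : ℚ := (x - (m : ℚ)) / ((d : ℚ) - (m : ℚ)) with hq
      have hp0 : 0 ≤ p := div_nonneg (by linarith) hdmQ.le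
      have hq0 : 0 ≤ q := div_nonneg (by linarith) hdmQ.le
      have hpq : p + q = 1 := by
        rw [hp, hq, ← add_div,
          show (d : ℚ) - x + (x - (m : ℚ)) = (d : ℚ) - (m : ℚ) by ring,
          div_self hdmQ.ne']
      have hcomb := hMc.2 (Set.mem_Icc.2 ⟨hmQ.le, hmd'⟩)
        (Set.mem_Icc.2 ⟨by positivity, le_refl ((d : ℚ))⟩) hp0 hq0 hpq
      simp only [smul_eq_mul] at hcomb
      have hqm : p * (m : ℚ) + q * (d : ℚ) = x := by
        rw [hp, hq]
        field_simp
        ring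
      rw [hqm] at hcomb
      have hle : M x ≤ p * qb + q * 0 :=
        hcomb.trans (add_le_add (mul_le_mul_of_nonneg_left hMm hp0)
          (mul_le_mul_of_nonneg_left hMd hq0))
      have heq : p * qb + q * 0 = L₂ x := by
        show _ = (qb - s₂ * (m : ℚ)) + s₂ * x
        rw [hp, hq, hs₂]
        field_simp
        ring
      exact le_trans (heq ▸ hle) le_sup_right
  · intro x hx
    show L₁ x ⊔ L₂ x = qβ + s₁ * x
    rw [sup_eq_left.2 (hL12 x hx.2)]
  · intro x hx
    show L₁ x ⊔ L₂ x = qb + s₂ * (x - (m : ℚ))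
    rw [sup_eq_right.2 (hL21 x hx.1)]
    show (qb - s₂ * (m : ℚ)) + s₂ * x = _
    ring
  · exact hs
end

section
/- Let $d \geq 3$ be odd, $K$ a number field with ring of integers $\mathcal{O}_K$, and $s, t \in \mathcal{O}_K$ with $2(d-2)s$ and $dt$ relatively prime. Let $b = s^2/t^2$, $f(x) = x^d - bx^{d-2}$, and $\eta$ with $\eta^2 = (d-2)s^2/(dt^2)$. Then for every $n \geq 1$: $(dt^2)^{d^n} f^n(\eta)^2 = 4^{(d-2)^{n-1}} (d-2)^{(d-2)^n} s^{2e_n} M_n^2$, where $e_n = (d-2)^n + 2(d-2)^{n-1} + \cdots + 2(d-2) + 2$ and $M_n \in \mathcal{O}_K$ is relatively prime to $2d(d-2)st$. -/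
open NumberField

theorem not_isUnit_natCast_aux (K : Type*) [Field K] [NumberField K] (m : ℕ) (hm : 2 ≤ m) :
    ¬ IsUnit ((m : 𝓞 K)) := by
  intro h
  obtain ⟨u, hu⟩ := h
  have h1 : (algebraMap (𝓞 K) K) ((u⁻¹ : (𝓞 K)ˣ) : 𝓞 K) = (m : K)⁻¹ := by
    have : ((u : 𝓞 K) * ((u⁻¹ : (𝓞 K)ˣ) : 𝓞 K)) = 1 := by
      exact_mod_cast u.mul_inv
    have h2 := congrArg (algebraMap (𝓞 K) K) this
    rw [map_mul, map_one, hu, map_natCast] at h2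
    exact (inv_eq_of_mul_eq_one_right h2).symm
  have hint : IsIntegral ℤ ((m : K)⁻¹) := by
    rw [← h1]; exact RingOfIntegers.isIntegral_coe _
  have hre : (m:K)⁻¹ = algebraMap ℚ K ((m:ℚ)⁻¹) := by push_cast; simp
  rw [hre, isIntegral_algebraMap_iff (algebraMap ℚ K).injective] at hint
  obtain ⟨y, hy⟩ := IsIntegrallyClosed.isIntegral_iff.mp hint
  rw [eq_intCast] at hy
  have hm0 : (m:ℚ) ≠ 0 := by positivity
  have h3 : (y : ℚ) * m = 1 := by rw [hy]; field_simp
  have h4 : y * (m:ℤ) = 1 := by exact_mod_cast h3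
  have : (m:ℤ) ∣ 1 := ⟨y, by linarith⟩
  have := Int.le_of_dvd one_pos this
  omega

theorem step_coprime_aux {R : Type*} [CommRing R] (dO Δ s t M : R)
    (hcop : IsCoprime (2 * Δ * s) (dO * t))
    (hM : IsCoprime M (2 * dO * Δ * s * t))
    (a c e m : ℕ) (ha : 1 ≤ a) (hc : 1 ≤ c) (he : 2 ≤ e) (hm : 2 ≤ m) :
    IsCoprime (4 ^ a * Δ ^ c * s ^ (2 * (e - 1)) * M ^ 2 - dO ^ m * t ^ (2 * (m - 1)))
      (2 * dO * Δ * s * t) := by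
  obtain ⟨a, rfl⟩ : ∃ a', a = a' + 1 := ⟨a - 1, by omega⟩
  obtain ⟨c, rfl⟩ : ∃ c', c = c' + 1 := ⟨c - 1, by omega⟩
  obtain ⟨m, rfl⟩ : ∃ m', m = m' + 2 := ⟨m - 2, by omega⟩
  obtain ⟨e2, he2⟩ : ∃ e2, 2 * (e - 1) = e2 + 1 := ⟨2 * (e - 1) - 1, by omega⟩
  have hm2 : 2 * (m + 2 - 1) = 2 * m + 2 := by omega
  rw [he2, hm2]
  have hdO2Δs : IsCoprime dO (2 * Δ * s) :=
    hcop.symm.of_isCoprime_of_dvd_left (dvd_mul_right dO t)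
  have ht2Δs : IsCoprime t (2 * Δ * s) :=
    hcop.symm.of_isCoprime_of_dvd_left (dvd_mul_left t dO)
  have hterm : IsCoprime (dO ^ (m + 2) * t ^ (2 * m + 2)) (2 * Δ * s) :=
    (hdO2Δs.pow_left).mul_left (ht2Δs.pow_left)
  have hN2Δs : IsCoprime
      (4 ^ (a + 1) * Δ ^ (c + 1) * s ^ (e2 + 1) * M ^ 2 - dO ^ (m + 2) * t ^ (2 * m + 2))
      (2 * Δ * s) := by
    have hrw : 4 ^ (a + 1) * Δ ^ (c + 1) * s ^ (e2 + 1) * M ^ 2 - dO ^ (m + 2) * t ^ (2 * m + 2)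
        = -(dO ^ (m + 2) * t ^ (2 * m + 2))
          + (2 * Δ * s) * (2 * 4 ^ a * Δ ^ c * s ^ e2 * M ^ 2) := by ring
    rw [hrw]
    exact (hterm.neg_left).add_mul_left_left _
  have h2dt : IsCoprime 2 (dO * t) := hcop.of_isCoprime_of_dvd_left ⟨Δ * s, by ring⟩
  have h4dt : IsCoprime 4 (dO * t) := by
    have := h2dt.mul_left h2dt
    rwa [show (2 : R) * 2 = 4 by norm_num] at this
  have hΔdt : IsCoprime Δ (dO * t) := hcop.of_isCoprime_of_dvd_left ⟨2 * s, by ring⟩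
  have hsdt : IsCoprime s (dO * t) := hcop.of_isCoprime_of_dvd_left ⟨2 * Δ, by ring⟩
  have hMdt : IsCoprime M (dO * t) := hM.of_isCoprime_of_dvd_right ⟨2 * Δ * s, by ring⟩
  have hXdt : IsCoprime (4 ^ (a + 1) * Δ ^ (c + 1) * s ^ (e2 + 1) * M ^ 2) (dO * t) :=
    (((h4dt.pow_left).mul_left (hΔdt.pow_left)).mul_left (hsdt.pow_left)).mul_left
      (hMdt.pow_left)
  have hNdt : IsCoprime
      (4 ^ (a + 1) * Δ ^ (c + 1) * s ^ (e2 + 1) * M ^ 2 - dO ^ (m + 2) * t ^ (2 * m + 2))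
      (dO * t) := by
    have hrw : 4 ^ (a + 1) * Δ ^ (c + 1) * s ^ (e2 + 1) * M ^ 2 - dO ^ (m + 2) * t ^ (2 * m + 2)
        = 4 ^ (a + 1) * Δ ^ (c + 1) * s ^ (e2 + 1) * M ^ 2
          + (dO * t) * (-(dO ^ (m + 1) * t ^ (2 * m + 1))) := by ring
    rw [hrw]
    exact hXdt.add_mul_left_left _
  have hfin := hN2Δs.mul_right hNdt
  rwa [show 2 * Δ * s * (dO * t) = 2 * dO * Δ * s * t by ring] at hfin

/-- Structure of the critical orbit for `f(x) = x^d - bx^{d-2}` (`d ≥ 3` odd,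
`b = s²/t²`, `η² = (d-2)s²/(dt²)`): for every `n ≥ 1`,
`(dt²)^{d^n} f^n(η)² = 4^{(d-2)^{n-1}} (d-2)^{(d-2)^n} s^{2e_n} M_n²` with `M_n ∈ 𝒪_K`
coprime to `2d(d-2)st`, where `e_n = (d-2)^n + 2(d-2)^{n-1} + ⋯ + 2(d-2) + 2`. -/
theorem stmt15 (K : Type*) [Field K] [NumberField K] (d : ℕ) (hd : 3 ≤ d) (hodd : Odd d)
    (s t : RingOfIntegers K)
    (hcop : IsCoprime (2 * ((d : RingOfIntegers K) - 2) * s) ((d : RingOfIntegers K) * t))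
    (η : K)
    (hη : η ^ 2 = ((d : K) - 2) * (algebraMap (RingOfIntegers K) K s) ^ 2 /
      ((d : K) * (algebraMap (RingOfIntegers K) K t) ^ 2))
    (n : ℕ) (hn : 1 ≤ n) :
    ∃ M : RingOfIntegers K,
      IsCoprime M (2 * (d : RingOfIntegers K) * ((d : RingOfIntegers K) - 2) * s * t) ∧
      (let sK : K := algebraMap (RingOfIntegers K) K s
       let tK : K := algebraMap (RingOfIntegers K) K t
       let b : K := sK ^ 2 / tK ^ 2
       let f : K → K := fun x => x ^ d - b * x ^ (d - 2)
       ((d : K) * tK ^ 2) ^ (d ^ n) * (f^[n] η) ^ 2 =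
         4 ^ ((d - 2) ^ (n - 1)) * ((d : K) - 2) ^ ((d - 2) ^ n) *
           sK ^ (2 * ((d - 2) ^ n + 2 * ∑ j ∈ Finset.range n, (d - 2) ^ j)) *
           (algebraMap (RingOfIntegers K) K M) ^ 2) := by
  obtain ⟨k, rfl⟩ : ∃ k, d = k + 3 := ⟨d - 3, by omega⟩
  clear hd hodd
  have h2u : ¬ IsUnit (2 : 𝓞 K) := by
    have := not_isUnit_natCast_aux K 2 le_rfl
    simpa using this
  have ht0 : t ≠ 0 := by
    rintro rfl
    rw [mul_zero] at hcop
    have h := isCoprime_zero_right.mp hcop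
    exact h2u (isUnit_of_mul_isUnit_left (isUnit_of_mul_isUnit_left h))
  set σ : K := algebraMap (𝓞 K) K s with hσdef
  set τ : K := algebraMap (𝓞 K) K t with hτdef
  have hτ : τ ≠ 0 := fun h => ht0 (RingOfIntegers.coe_eq_zero_iff.mp h)
  have hD : ((k + 3 : ℕ) : K) ≠ 0 := Nat.cast_ne_zero.mpr (by omega)
  have hC : ((k + 3 : ℕ) : K) * τ ^ 2 ≠ 0 := mul_ne_zero hD (pow_ne_zero _ hτ)
  have key : ∀ n : ℕ, 1 ≤ n → ∃ M : 𝓞 K,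
      IsCoprime M (2 * ((k + 3 : ℕ) : 𝓞 K) * (((k + 3 : ℕ) : 𝓞 K) - 2) * s * t) ∧
      (((k + 3 : ℕ) : K) * τ ^ 2) ^ ((k + 3) ^ n) *
        ((fun x : K => x ^ (k + 3) - σ ^ 2 / τ ^ 2 * x ^ (k + 1))^[n] η) ^ 2 =
        4 ^ ((k + 1) ^ (n - 1)) * (((k + 3 : ℕ) : K) - 2) ^ ((k + 1) ^ n) *
          σ ^ (2 * ((k + 1) ^ n + 2 * ∑ j ∈ Finset.range n, (k + 1) ^ j)) *
          (algebraMap (𝓞 K) K M) ^ 2 := by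
    intro n hn
    induction n, hn using Nat.le_induction with
    | base =>
      refine ⟨1, isCoprime_one_left, ?_⟩
      have hCk : (((k + 3 : ℕ) : K) * τ ^ 2) ^ (k + 1) ≠ 0 := pow_ne_zero _ hC
      have hC2 : (((k + 3 : ℕ) : K) * τ ^ 2) ^ 2 ≠ 0 := pow_ne_zero _ hC
      simp only [Function.iterate_one, pow_one, map_one, mul_one, one_pow,
        Finset.sum_range_one, Nat.sub_self, pow_zero]
      have hfactor : (η ^ (k + 3) - σ ^ 2 / τ ^ 2 * η ^ (k + 1)) ^ 2
          = (η ^ 2) ^ (k + 1) * (η ^ 2 - σ ^ 2 / τ ^ 2) ^ 2 := by ring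
      rw [hfactor, hη]
      have e1 : (((k + 3 : ℕ) : K) - 2) * σ ^ 2 / (((k + 3 : ℕ) : K) * τ ^ 2) - σ ^ 2 / τ ^ 2
          = -2 * σ ^ 2 / (((k + 3 : ℕ) : K) * τ ^ 2) := by
        have h0 : σ ^ 2 / τ ^ 2 = ((k + 3 : ℕ) : K) * σ ^ 2 / (((k + 3 : ℕ) : K) * τ ^ 2) := by
          rw [mul_div_mul_left _ _ hD]
        rw [h0, div_sub_div_same]
        congr 1
        ring
      rw [e1]
      calc (((k + 3 : ℕ) : K) * τ ^ 2) ^ (k + 3) *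
          (((((k + 3 : ℕ) : K) - 2) * σ ^ 2 / (((k + 3 : ℕ) : K) * τ ^ 2)) ^ (k + 1) *
            (-2 * σ ^ 2 / (((k + 3 : ℕ) : K) * τ ^ 2)) ^ 2)
          = ((((k + 3 : ℕ) : K) - 2) * σ ^ 2) ^ (k + 1) / (((k + 3 : ℕ) : K) * τ ^ 2) ^ (k + 1)
              * (((k + 3 : ℕ) : K) * τ ^ 2) ^ (k + 1) *
            ((-2 * σ ^ 2) ^ 2 / (((k + 3 : ℕ) : K) * τ ^ 2) ^ 2 *
              (((k + 3 : ℕ) : K) * τ ^ 2) ^ 2) := by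
            rw [div_pow, div_pow, show k + 3 = k + 1 + 2 from rfl, pow_add]; ring
        _ = ((((k + 3 : ℕ) : K) - 2) * σ ^ 2) ^ (k + 1) * (-2 * σ ^ 2) ^ 2 := by
            rw [div_mul_cancel₀ _ hCk, div_mul_cancel₀ _ hC2]
        _ = 4 * (((k + 3 : ℕ) : K) - 2) ^ (k + 1) * σ ^ (2 * (k + 1 + 2)) := by
            rw [mul_pow]; ring
    | succ n hn ih =>
      obtain ⟨M, hMcop, hMeq⟩ := ih
      set D : 𝓞 K := ((k + 3 : ℕ) : 𝓞 K) with hDdef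
      set Δ : 𝓞 K := ((k + 3 : ℕ) : 𝓞 K) - 2 with hΔdef
      set S : ℕ := ∑ j ∈ Finset.range n, (k + 1) ^ j with hSdef
      set E : ℕ := (k + 1) ^ n + 2 * S with hEdef
      set c : ℕ := (k + 1) ^ n with hcdef
      set a : ℕ := (k + 1) ^ (n - 1) with hadef
      set m : ℕ := (k + 3) ^ n with hmdef
      have hm3 : 3 ≤ m := by
        calc 3 ≤ k + 3 := by omega
        _ ≤ (k + 3) ^ n := Nat.le_self_pow (by omega) _
      have hc1 : 1 ≤ c := Nat.one_le_pow _ _ (by omega)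
      have hS1 : 1 ≤ S := by
        rw [hSdef]
        calc 1 = ∑ j ∈ Finset.range 1, (k + 1) ^ j := by simp
        _ ≤ _ := Finset.sum_le_sum_of_subset (Finset.range_subset_range.mpr hn)
      have hE2 : 2 ≤ E := by omega
      have ha1 : 1 ≤ a := Nat.one_le_pow _ _ (by omega)
      set RO : 𝓞 K := 4 ^ a * Δ ^ c * s ^ (2 * E) * M ^ 2 with hROdef
      set BO : 𝓞 K := D ^ m * t ^ (2 * (m - 1)) * s ^ 2 with hBOdef
      set N : 𝓞 K := 4 ^ a * Δ ^ c * s ^ (2 * (E - 1)) * M ^ 2 - D ^ m * t ^ (2 * (m - 1))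
        with hNdef
      clear_value D Δ S E c a m RO BO N
      refine ⟨M ^ (k + 1) * N, ?_, ?_⟩
      · refine (hMcop.pow_left).mul_left ?_
        rw [hNdef]
        exact step_coprime_aux D Δ s t M hcop hMcop a c E m ha1 hc1 hE2 (by omega)
      · -- the equation
        have hMeq' : (((k + 3 : ℕ) : K) * τ ^ 2) ^ m *
            ((fun x : K => x ^ (k + 3) - σ ^ 2 / τ ^ 2 * x ^ (k + 1))^[n] η) ^ 2
            = algebraMap (𝓞 K) K RO := by
          rw [hMeq, hROdef]
          simp only [hΔdef, map_mul, map_pow, map_sub, map_natCast, map_ofNat, ← hσdef,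
            ← hτdef]
        have hf2 : ∀ y : K, (y ^ (k + 3) - σ ^ 2 / τ ^ 2 * y ^ (k + 1)) ^ 2
            = (y ^ 2) ^ (k + 1) * (y ^ 2 - σ ^ 2 / τ ^ 2) ^ 2 := fun y => by ring
        have hiter : (fun x : K => x ^ (k + 3) - σ ^ 2 / τ ^ 2 * x ^ (k + 1))^[n + 1] η
            = ((fun x : K => x ^ (k + 3) - σ ^ 2 / τ ^ 2 * x ^ (k + 1))^[n] η) ^ (k + 3)
              - σ ^ 2 / τ ^ 2 *
                ((fun x : K => x ^ (k + 3) - σ ^ 2 / τ ^ 2 * x ^ (k + 1))^[n] η) ^ (k + 1) :=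
          Function.iterate_succ_apply' _ n η
        have hCb : (((k + 3 : ℕ) : K) * τ ^ 2) ^ m * (σ ^ 2 / τ ^ 2)
            = algebraMap (𝓞 K) K BO := by
          have hτp : (τ ^ 2 : K) ^ m = τ ^ (2 * (m - 1)) * τ ^ 2 := by
            rw [← pow_mul, ← pow_add]
            congr 1
            omega
          have hBOmap : algebraMap (𝓞 K) K BO
              = ((k + 3 : ℕ) : K) ^ m * τ ^ (2 * (m - 1)) * σ ^ 2 := by
            rw [hBOdef]
            simp only [hDdef, map_mul, map_pow, map_natCast, ← hσdef, ← hτdef]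
          rw [hBOmap, mul_pow, hτp]
          field_simp
        have hCpow : (((k + 3 : ℕ) : K) * τ ^ 2) ^ ((k + 3) ^ (n + 1))
            = ((((k + 3 : ℕ) : K) * τ ^ 2) ^ m) ^ (k + 1)
              * ((((k + 3 : ℕ) : K) * τ ^ 2) ^ m) ^ 2 := by
          rw [← pow_mul, ← pow_mul, ← pow_add]
          congr 1
          rw [pow_succ, ← hmdef]
          ring
        have hmain : (((k + 3 : ℕ) : K) * τ ^ 2) ^ ((k + 3) ^ (n + 1)) *
            ((fun x : K => x ^ (k + 3) - σ ^ 2 / τ ^ 2 * x ^ (k + 1))^[n + 1] η) ^ 2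
            = algebraMap (𝓞 K) K (RO ^ (k + 1) * (RO - BO) ^ 2) := by
          rw [hiter, hf2, hCpow]
          rw [map_mul, map_pow, map_pow, map_sub]
          rw [← hMeq', ← hCb, mul_pow]
          ring
        rw [hmain]
        -- O_K-side identity
        have hsum : ∑ j ∈ Finset.range (n + 1), (k + 1) ^ j = (k + 1) * S + 1 := by
          rw [hSdef, geom_sum_succ]
        have hac : a * (k + 1) = c := by
          rw [hadef, hcdef, ← pow_succ]
          congr 1
          omega
        have hcc : c * (k + 1) = (k + 1) ^ (n + 1) := by rw [hcdef, ← pow_succ]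
        have hEE : 2 * ((k + 1) ^ (n + 1) + 2 * ∑ j ∈ Finset.range (n + 1), (k + 1) ^ j)
            = 2 * E * (k + 1) + 4 := by
          rw [hsum, hEdef, pow_succ, ← hcdef]
          ring
        have hOK : RO ^ (k + 1) * (RO - BO) ^ 2
            = 4 ^ c * Δ ^ ((k + 1) ^ (n + 1))
              * s ^ (2 * ((k + 1) ^ (n + 1) + 2 * ∑ j ∈ Finset.range (n + 1), (k + 1) ^ j))
              * (M ^ (k + 1) * N) ^ 2 := by
          have h1 : RO - BO = s ^ 2 * N := by
            rw [hROdef, hBOdef, hNdef, show 2 * E = 2 * (E - 1) + 2 by omega]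
            ring
          have hOK' : RO ^ (k + 1) * (RO - BO) ^ 2
              = 4 ^ (a * (k + 1)) * Δ ^ (c * (k + 1)) * s ^ (2 * E * (k + 1) + 4)
                * (M ^ (k + 1) * N) ^ 2 := by
            rw [h1, hROdef]
            ring
          rw [hOK', hac, hcc, ← hEE]
        rw [hOK]
        simp only [hΔdef, map_mul, map_pow, map_sub, map_natCast, map_ofNat, ← hσdef,
          Nat.add_sub_cancel, ← hcdef]
  exact key n hn
end

section
/- Let $d \geq 3$ be odd, $K$ a number field with ring of integers $\mathcal{O}_K$, $s,t \in \mathcal{O}_K$ with $2(d-2)s$ and $dt$ relatively prime, $x_0 = s/t$, $b = x_0^2$, $f(x) = x^d - bx^{d-2}$, and $\eta$ with $\eta^2 = (d-2)x_0^2/d$. Then for every $n \geq 1$, the element $F_n := s^{-2}(dt^2)^{d^n}(f^n(\eta)^2 - x_0^2)$ lies in $\mathcal{O}_K$ and is relatively prime to $2d(d-2)st$. -/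
open NumberField

/-!
Since `f x = x ^ (d - 2) * (x ^ 2 - b)`, the squares `uₙ = (fⁿ η)²` satisfy
`uₙ₊₁ = uₙ ^ (d - 2) * (uₙ - b) ^ 2`, and `d ^ (n + 1) = (d - 2) d ^ n + 2 d ^ n` lets the scaling
`(d t²) ^ d ^ n` pass through this recursion. Writing `(d t²) ^ d ^ n * uₙ = s² Bₙ`, one gets
`B₀ = d - 2`, `Fₙ = Bₙ - d ^ d ^ n t ^ (2 d ^ n - 2)` and `Bₙ₊₁ = s ^ (2 (d - 1)) Bₙ ^ (d - 2) Fₙ²`,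
all in `𝓞 K`. As `F₀ = -2`, every `Bₙ` with `n ≥ 1` is a multiple of
`B₁ = 4 (d - 2) ^ (d - 2) s ^ (2 (d - 1))`, so `Fₙ` is prime to `2 (d - 2) s`; modulo `d t` one has
`Fₙ ≡ Bₙ` for `n ≥ 1`, and `Bₙ` is prime to `d t` by induction from `B₀ = d - 2`.
-/

theorem IsCoprime.sub_of_dvd_right {R : Type*} [CommRing R] {a b c : R}
    (h : IsCoprime a c) (hb : c ∣ b) : IsCoprime (a - b) c := by
  obtain ⟨q, rfl⟩ := hb
  simpa [sub_eq_add_neg, ← mul_neg] using h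

theorem IsCoprime.sub_of_dvd_left {R : Type*} [CommRing R] {a b c : R}
    (h : IsCoprime b c) (ha : c ∣ a) : IsCoprime (a - b) c := by
  simpa using (h.sub_of_dvd_right ha).neg_left

theorem NumberField.RingOfIntegers.not_isUnit_natCast (K : Type*) [Field K] [NumberField K]
    {m : ℕ} (hm : 2 ≤ m) : ¬IsUnit (m : 𝓞 K) := by
  have hcast : ((m : 𝓞 K) : K) = algebraMap ℚ K m := by simp
  rw [NumberField.isUnit_iff_norm, RingOfIntegers.coe_norm, hcast, Algebra.norm_algebraMap]
  have : (1 : ℚ) < (m : ℚ) ^ Module.finrank ℚ K :=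
    one_lt_pow₀ (by exact_mod_cast hm) Module.finrank_pos.ne'
  rw [abs_of_pos (by positivity)]
  exact this.ne'

section Sequence

variable {R : Type*} [CommRing R] (d : ℕ) (s t : R)

/-- `scaledSq d s t n = s⁻² (d t²) ^ d ^ n (fⁿ η)²` (`scaledSq_spec`); `scaledGap` is the
paper's `Fₙ`. -/
def scaledSq : ℕ → R
  | 0 => (d : R) - 2
  | n + 1 => s ^ (2 * (d - 1)) * scaledSq n ^ (d - 2) *
      (scaledSq n - d ^ d ^ n * t ^ (2 * d ^ n - 2)) ^ 2

def scaledGap (n : ℕ) : R := scaledSq d s t n - d ^ d ^ n * t ^ (2 * d ^ n - 2)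

theorem scaledSq_succ (n : ℕ) :
    scaledSq d s t (n + 1) = s ^ (2 * (d - 1)) * scaledSq d s t n ^ (d - 2) *
      scaledGap d s t n ^ 2 := rfl

theorem scaledGap_zero : scaledGap d s t 0 = -2 := by
  simp [scaledGap, scaledSq]

theorem map_scaledSq {S : Type*} [CommRing S] (φ : R →+* S) (n : ℕ) :
    φ (scaledSq d s t n) = scaledSq d (φ s) (φ t) n := by
  induction n with
  | zero => simp [scaledSq, map_ofNat]
  | succ n ih => simp [scaledSq, ih]

theorem map_scaledGap {S : Type*} [CommRing S] (φ : R →+* S) (n : ℕ) :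
    φ (scaledGap d s t n) = scaledGap d (φ s) (φ t) n := by
  simp [scaledGap, map_scaledSq]

variable {d s t}

theorem scaledSq_dvd_succ (hd : 3 ≤ d) (n : ℕ) : scaledSq d s t n ∣ scaledSq d s t (n + 1) :=
  (dvd_pow_self _ (by omega)).mul_left _ |>.mul_right _

theorem dvd_scaledSq (hd : 3 ≤ d) {n : ℕ} (hn : 1 ≤ n) :
    2 * ((d : R) - 2) * s ∣ scaledSq d s t n := by
  induction n, hn using Nat.le_induction with
  | base =>
    calc 2 * ((d : R) - 2) * s ∣ (-2) ^ 2 * ((d : R) - 2) ^ (d - 2) * s ^ (2 * (d - 1)) :=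
          mul_dvd_mul (mul_dvd_mul ⟨2, by ring⟩ (dvd_pow_self _ (by omega)))
            (dvd_pow_self _ (by omega))
      _ = scaledSq d s t 1 := by rw [scaledSq_succ, scaledGap_zero, scaledSq]; ring
  | succ n _ ih => exact ih.trans (scaledSq_dvd_succ hd n)

theorem isCoprime_scaledGap_of_scaledSq (hd : 2 ≤ d)
    (hcop : IsCoprime (2 * ((d : R) - 2) * s) ((d : R) * t)) {n : ℕ}
    (h : IsCoprime (scaledSq d s t n) ((d : R) * t)) :
    IsCoprime (scaledGap d s t n) ((d : R) * t) := by
  cases n with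
  | zero => rw [scaledGap_zero]; exact hcop.of_mul_left_left.of_mul_left_left.neg_left
  | succ n =>
    have : 2 ≤ d ^ (n + 1) := hd.trans (Nat.le_self_pow (by omega) d)
    exact h.sub_of_dvd_right (mul_dvd_mul (dvd_pow_self _ (by omega)) (dvd_pow_self _ (by omega)))

theorem isCoprime_scaledSq (hd : 2 ≤ d)
    (hcop : IsCoprime (2 * ((d : R) - 2) * s) ((d : R) * t)) (n : ℕ) :
    IsCoprime (scaledSq d s t n) ((d : R) * t) := by
  induction n with
  | zero => exact hcop.of_mul_left_left.of_mul_left_right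
  | succ n ih =>
    rw [scaledSq_succ]
    exact (hcop.of_mul_left_right.pow_left.mul_left ih.pow_left).mul_left
      (isCoprime_scaledGap_of_scaledSq hd hcop ih).pow_left

theorem isCoprime_scaledGap (hd : 3 ≤ d)
    (hcop : IsCoprime (2 * ((d : R) - 2) * s) ((d : R) * t)) {n : ℕ} (hn : 1 ≤ n) :
    IsCoprime (scaledGap d s t n) (2 * d * ((d : R) - 2) * s * t) := by
  have hdt : IsCoprime (scaledGap d s t n) ((d : R) * t) :=
    isCoprime_scaledGap_of_scaledSq (by omega) hcop (isCoprime_scaledSq (by omega) hcop n)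
  have hs : IsCoprime (scaledGap d s t n) (2 * ((d : R) - 2) * s) :=
    (hcop.symm.of_mul_left_left.pow_left.mul_left
      hcop.symm.of_mul_left_right.pow_left).sub_of_dvd_left (dvd_scaledSq hd hn)
  simpa only [show 2 * ((d : R) - 2) * s * (d * t) = 2 * d * (d - 2) * s * t by ring]
    using hs.mul_right hdt

end Sequence

section Field

variable {K : Type*} [Field K] {d : ℕ} {s t : K}

theorem mul_sq_pow_mul_div_sq (ht : t ≠ 0) {m : ℕ} (hm : 1 ≤ m) :
    ((d : K) * t ^ 2) ^ m * (s / t) ^ 2 = s ^ 2 * (d ^ m * t ^ (2 * m - 2)) := by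
  obtain ⟨k, rfl⟩ : ∃ k, m = k + 1 := ⟨m - 1, by omega⟩
  rw [show 2 * (k + 1) - 2 = 2 * k by omega]
  field_simp
  ring

theorem scaledSq_spec (hd : 2 ≤ d) (ht : t ≠ 0) (hd0 : (d : K) ≠ 0) {η : K}
    (hη : η ^ 2 = ((d : K) - 2) * (s / t) ^ 2 / d) (n : ℕ) :
    ((d : K) * t ^ 2) ^ d ^ n * ((fun x => x ^ d - (s / t) ^ 2 * x ^ (d - 2))^[n] η) ^ 2 =
      s ^ 2 * scaledSq d s t n := by
  induction n with
  | zero =>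
    rw [pow_zero, pow_one, Function.iterate_zero_apply, hη, scaledSq]
    field_simp
  | succ n ih =>
    rw [Function.iterate_succ_apply']
    set y := (fun x => x ^ d - (s / t) ^ 2 * x ^ (d - 2))^[n] η
    set D := (d : K) * t ^ 2
    obtain ⟨e, rfl⟩ : ∃ e, d = e + 2 := ⟨d - 2, by omega⟩
    have hm : 1 ≤ (e + 2) ^ n := Nat.one_le_pow _ _ (by omega)
    have hfy : (y ^ (e + 2) - (s / t) ^ 2 * y ^ (e + 2 - 2)) ^ 2 =
        (y ^ 2) ^ e * (y ^ 2 - (s / t) ^ 2) ^ 2 := by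
      rw [Nat.add_sub_cancel]; ring
    have hD : D ^ (e + 2) ^ (n + 1) = (D ^ (e + 2) ^ n) ^ e * (D ^ (e + 2) ^ n) ^ 2 := by
      rw [← pow_add, ← pow_mul, pow_succ]
    calc D ^ (e + 2) ^ (n + 1) * (y ^ (e + 2) - (s / t) ^ 2 * y ^ (e + 2 - 2)) ^ 2
        = (D ^ (e + 2) ^ n * y ^ 2) ^ e *
            (D ^ (e + 2) ^ n * y ^ 2 - D ^ (e + 2) ^ n * (s / t) ^ 2) ^ 2 := by
          rw [hfy, hD]; ring
      _ = (s ^ 2 * scaledSq (e + 2) s t n) ^ e * (s ^ 2 * scaledSq (e + 2) s t n -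
            s ^ 2 * ((e + 2 : ℕ) ^ (e + 2) ^ n * t ^ (2 * (e + 2) ^ n - 2))) ^ 2 := by
          rw [ih, mul_sq_pow_mul_div_sq ht hm]
      _ = s ^ 2 * scaledSq (e + 2) s t (n + 1) := by
          rw [scaledSq_succ, scaledGap, show e + 2 - 1 = e + 1 by omega, Nat.add_sub_cancel]
          ring

theorem scaledGap_spec (hd : 2 ≤ d) (ht : t ≠ 0) (hd0 : (d : K) ≠ 0) {η : K}
    (hη : η ^ 2 = ((d : K) - 2) * (s / t) ^ 2 / d) (n : ℕ) :
    ((d : K) * t ^ 2) ^ d ^ n *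
        (((fun x => x ^ d - (s / t) ^ 2 * x ^ (d - 2))^[n] η) ^ 2 - (s / t) ^ 2) =
      s ^ 2 * scaledGap d s t n := by
  rw [mul_sub, scaledSq_spec hd ht hd0 hη,
    mul_sq_pow_mul_div_sq ht (Nat.one_le_pow _ _ (by omega)), scaledGap, mul_sub]

end Field

theorem stmt16_general (K : Type*) [Field K] [NumberField K] (d : ℕ) (hd : 3 ≤ d)
    (s t : RingOfIntegers K)
    (hcop : IsCoprime (2 * ((d : RingOfIntegers K) - 2) * s) ((d : RingOfIntegers K) * t))
    (η : K)
    (hη : η ^ 2 = ((d : K) - 2) *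
      (algebraMap (RingOfIntegers K) K s / algebraMap (RingOfIntegers K) K t) ^ 2 / (d : K))
    (n : ℕ) (hn : 1 ≤ n) :
    ∃ F : RingOfIntegers K,
      IsCoprime F (2 * (d : RingOfIntegers K) * ((d : RingOfIntegers K) - 2) * s * t) ∧
      (let sK : K := algebraMap (RingOfIntegers K) K s
       let tK : K := algebraMap (RingOfIntegers K) K t
       let x₀ : K := sK / tK
       let b : K := x₀ ^ 2
       let f : K → K := fun x => x ^ d - b * x ^ (d - 2)
       algebraMap (RingOfIntegers K) K F =
         (sK ^ 2)⁻¹ * ((d : K) * tK ^ 2) ^ (d ^ n) * ((f^[n] η) ^ 2 - x₀ ^ 2)) := by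
  have ht : t ≠ 0 := by
    rintro rfl
    rw [mul_zero, isCoprime_zero_right] at hcop
    exact RingOfIntegers.not_isUnit_natCast K le_rfl
      (by exact_mod_cast isUnit_of_mul_isUnit_left (isUnit_of_mul_isUnit_left hcop))
  have hs : s ≠ 0 := by
    rintro rfl
    rw [mul_zero, isCoprime_zero_left] at hcop
    exact RingOfIntegers.not_isUnit_natCast K (by omega) (isUnit_of_mul_isUnit_left hcop)
  refine ⟨scaledGap d s t n, isCoprime_scaledGap hd hcop hn, ?_⟩
  dsimp only
  rw [map_scaledGap, mul_assoc, scaledGap_spec (by omega) (RingOfIntegers.coe_ne_zero_iff.mpr ht)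
    (by exact_mod_cast (by omega : d ≠ 0)) hη, inv_mul_cancel_left₀]
  exact pow_ne_zero 2 (RingOfIntegers.coe_ne_zero_iff.mpr hs)

/-- For odd `d ≥ 3`, `x₀ = s/t`, `b = x₀²`, `f(x) = x^d - bx^{d-2}`, and
`η² = (d-2)x₀²/d`, the element `F_n = s^{-2}(dt²)^{d^n}(f^n(η)² - x₀²)` is an algebraic
integer relatively prime to `2d(d-2)st`, for every `n ≥ 1`. -/
theorem stmt16 (K : Type*) [Field K] [NumberField K] (d : ℕ) (hd : 3 ≤ d) (hodd : Odd d)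
    (s t : RingOfIntegers K)
    (hcop : IsCoprime (2 * ((d : RingOfIntegers K) - 2) * s) ((d : RingOfIntegers K) * t))
    (η : K)
    (hη : η ^ 2 = ((d : K) - 2) *
      (algebraMap (RingOfIntegers K) K s / algebraMap (RingOfIntegers K) K t) ^ 2 / (d : K))
    (n : ℕ) (hn : 1 ≤ n) :
    ∃ F : RingOfIntegers K,
      IsCoprime F (2 * (d : RingOfIntegers K) * ((d : RingOfIntegers K) - 2) * s * t) ∧
      (let sK : K := algebraMap (RingOfIntegers K) K s
       let tK : K := algebraMap (RingOfIntegers K) K t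
       let x₀ : K := sK / tK
       let b : K := x₀ ^ 2
       let f : K → K := fun x => x ^ d - b * x ^ (d - 2)
       algebraMap (RingOfIntegers K) K F =
         (sK ^ 2)⁻¹ * ((d : K) * tK ^ 2) ^ (d ^ n) * ((f^[n] η) ^ 2 - x₀ ^ 2)) :=
  stmt16_general K d hd s t hcop η hη n hn
end

section
/- Let $K$ be a number field with ring of integers $\mathcal{O}_K$, let $d \geq 3$ be odd such that $d$ is not a square in $K$, let $\mathfrak{q}$ be a prime of $\mathcal{O}_K$ dividing $d$ to an odd power (so $\mathfrak{q}$ lies over an odd rational prime), and let $L = K(\sqrt{u_1}, \dots, \sqrt{u_r})$ where $u_1, \dots, u_r$ generate the unit group $\mathcal{O}_K^\times$. Then $K(\sqrt{d}) \cap L = K$, and $L(\sqrt{d})/L$ is a quadratic extension. -/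
/-!
Adjoin the square roots of the units one at a time. An element `a + b√u` of the next layer
(`a, b` in the previous one) whose square lies in `K` has `ab = 0` unless `√u` already lies in
the previous layer, so by induction every `c ∈ K^×` with `√c ∈ L` lies in `𝒪_K^× K^{×2}`.
Units and squares have even `𝔮`-adic valuation, but `d` has odd valuation, so `√d ∉ L`.
-/

open NumberField IsDedekindDomain Polynomial IntermediateField

namespace IntermediateField

variable {F E : Type*} [Field F] [Field E] [Algebra F E]

theorem isIntegral_of_sq_eq_algebraMap {y : E} {c : F} (hy : y ^ 2 = algebraMap F E c) :
    IsIntegral F y :=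
  ⟨X ^ 2 - C c, monic_X_pow_sub_C c two_ne_zero, by simp [hy]⟩

theorem exists_eq_add_mul_of_mem_adjoin_sqrt {y : E} {c : F} (hy : y ^ 2 = algebraMap F E c)
    {z : E} (hz : z ∈ F⟮y⟯) : ∃ a b : F, z = algebraMap F E a + algebraMap F E b * y := by
  have hint := isIntegral_of_sq_eq_algebraMap hy
  obtain ⟨p, hp_lt, hp⟩ := (adjoin.powerBasis hint).exists_eq_aeval ⟨z, hz⟩
  have hdeg : (minpoly F y).natDegree ≤ 2 := by
    simpa using natDegree_le_of_dvd (minpoly.dvd F y (p := X ^ 2 - C c) (by simp [hy]))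
      (X_pow_sub_C_ne_zero two_pos c)
  obtain ⟨b, a, rfl⟩ := exists_eq_X_add_C_of_natDegree_le_one
    (p := p) (by rw [adjoin.powerBasis_dim] at hp_lt; omega)
  refine ⟨a, b, ?_⟩
  simpa [add_comm] using congrArg Subtype.val hp

theorem adjoin_setOf_sq_eq (x : E) : adjoin F {y | y ^ 2 = x ^ 2} = F⟮x⟯ := by
  refine le_antisymm (adjoin_le_iff.mpr fun y hy => ?_)
    (adjoin_simple_le_iff.mpr (subset_adjoin F _ rfl))
  rcases sq_eq_sq_iff_eq_or_eq_neg.mp hy with rfl | rfl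
  · exact mem_adjoin_simple_self F y
  · exact neg_mem (mem_adjoin_simple_self F x)

theorem finrank_adjoin_sqrt {y : E} {c : F} (hy : y ^ 2 = algebraMap F E c)
    (hc : ∀ b : F, b ^ 2 ≠ c) : Module.finrank F F⟮y⟯ = 2 := by
  have hmin : minpoly F y = X ^ 2 - C c :=
    (minpoly.eq_of_irreducible_of_monic (X_pow_sub_C_irreducible_of_prime Nat.prime_two hc)
      (by simp [hy]) (monic_X_pow_sub_C c two_ne_zero)).symm
  rw [adjoin.finrank (isIntegral_of_sq_eq_algebraMap hy), hmin, natDegree_X_pow_sub_C]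

variable (L : IntermediateField F E) {x : E} {c : F}

theorem adjoin_sqrt_inf_eq_bot (hx : x ^ 2 = algebraMap F E c) (hxL : x ∉ L) :
    F⟮x⟯ ⊓ L = ⊥ := by
  refine eq_bot_iff.mpr fun z ⟨hzx, hzL⟩ => ?_
  obtain ⟨a, b, rfl⟩ := exists_eq_add_mul_of_mem_adjoin_sqrt hx hzx
  by_cases hb : b = 0
  · simp [hb]
  · refine absurd ?_ hxL
    have hb' : algebraMap F E b ≠ 0 := by simpa using hb
    rw [show x = (algebraMap F E a + algebraMap F E b * x - algebraMap F E a) / algebraMap F E b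
      by rw [add_sub_cancel_left, mul_div_cancel_left₀ x hb']]
    exact div_mem (sub_mem hzL (L.algebraMap_mem a)) (L.algebraMap_mem b)

theorem finrank_sup_adjoin_sqrt (hx : x ^ 2 = algebraMap F E c) (hxL : x ∉ L) :
    Module.finrank F ↥(L ⊔ F⟮x⟯) = 2 * Module.finrank F L := by
  have hxc : x ^ 2 = algebraMap L E (algebraMap F L c) := hx
  have hc : ∀ b : L, b ^ 2 ≠ algebraMap F L c := fun b hb => by
    have hbx : (b : E) ^ 2 = x ^ 2 := by rw [hxc, ← hb]; rfl
    rcases sq_eq_sq_iff_eq_or_eq_neg.mp hbx with h | h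
    · exact hxL (h ▸ b.2)
    · exact hxL (by simpa [h] using neg_mem b.2)
  rw [← restrictScalars_adjoin_eq_sup, mul_comm, ← finrank_adjoin_sqrt hxc hc]
  exact (Module.finrank_mul_finrank F L L⟮x⟯).symm

end IntermediateField

theorem mem_of_sq_eq_of_mem_adjoin_finset {K Ω : Type*} [Field K] [Field Ω] [Algebra K Ω]
    [NeZero (2 : Ω)] {H : Subgroup Kˣ} (hsq : ∀ a : Kˣ, a ^ 2 ∈ H) (T : Finset Ω)
    (hT : ∀ y ∈ T, ∃ h ∈ H, y ^ 2 = algebraMap K Ω h) {z : Ω}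
    (hz : z ∈ adjoin K (T : Set Ω))
    {c : Kˣ} (hc : z ^ 2 = algebraMap K Ω c) : c ∈ H := by
  classical
  induction T using Finset.induction_on generalizing z c with
  | empty =>
    obtain ⟨a, rfl⟩ := mem_bot.mp (by simpa using hz)
    have ha : a ^ 2 = c := (algebraMap K Ω).injective (by simpa using hc)
    have ha0 : a ≠ 0 := by rintro rfl; exact c.ne_zero (by simpa using ha.symm)
    convert hsq (Units.mk0 a ha0)
    ext
    simp [ha]
  | insert y T _ ih =>
    set F := adjoin K (T : Set Ω)
    have ih' : ∀ z ∈ F, ∀ c : Kˣ, z ^ 2 = algebraMap K Ω c → c ∈ H := fun z hz c hc =>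
      ih (fun y hy => hT y (Finset.mem_insert_of_mem hy)) hz hc
    obtain ⟨h, hH, hy⟩ := hT y (Finset.mem_insert_self y T)
    have hzF : z ∈ F⟮y⟯ := by
      rw [← mem_restrictScalars K, adjoin_adjoin_left, Set.union_singleton, ← Finset.coe_insert]
      exact hz
    obtain ⟨a, b, rfl⟩ := exists_eq_add_mul_of_mem_adjoin_sqrt
      (c := algebraMap K F h) (by rwa [← IsScalarTower.algebraMap_apply]) hzF
    simp only [IntermediateField.algebraMap_apply] at hc ⊢
    by_cases hab : (2 * a * b : Ω) = 0
    · rcases mul_eq_zero.mp hab with ha | hb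
      · obtain ha : (a : Ω) = 0 := (mul_eq_zero.mp ha).resolve_left two_ne_zero
        have hbc : (b : Ω) ^ 2 = algebraMap K Ω ↑(c * h⁻¹) := by
          rw [Units.val_mul, map_mul, Units.val_inv_eq_inv_val, map_inv₀,
            eq_mul_inv_iff_mul_eq₀ (by simp)]
          linear_combination hc - b ^ 2 * hy + (- a - 2 * b * y) * ha
        simpa using H.mul_mem (ih' b b.2 _ hbc) hH
      · exact ih' a a.2 c (by rw [← hc, hb, zero_mul, add_zero])
    · have hyF : y ∈ F := by
        have hy_eq : y = (algebraMap K Ω c - a ^ 2 - b ^ 2 * algebraMap K Ω h) / (2 * a * b) := by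
          rw [eq_div_iff hab]
          linear_combination hc - b ^ 2 * hy
        rw [hy_eq]
        exact div_mem (sub_mem (sub_mem (F.algebraMap_mem _) (pow_mem a.2 2))
          (mul_mem (pow_mem b.2 2) (F.algebraMap_mem _)))
          (mul_mem (mul_mem (ofNat_mem F 2) a.2) b.2)
      exact ih' _ (add_mem a.2 (mul_mem b.2 hyF)) c hc

theorem mem_of_sq_eq_of_mem_adjoin {K Ω : Type*} [Field K] [Field Ω] [Algebra K Ω]
    [NeZero (2 : Ω)] {H : Subgroup Kˣ} (hsq : ∀ a : Kˣ, a ^ 2 ∈ H) {S : Set Ω}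
    (hS : ∀ y ∈ S, ∃ h ∈ H, y ^ 2 = algebraMap K Ω h) {z : Ω} (hz : z ∈ adjoin K S)
    {c : Kˣ} (hc : z ^ 2 = algebraMap K Ω c) : c ∈ H := by
  obtain ⟨T, hTS, hzT⟩ := exists_finset_of_mem_adjoin hz
  exact mem_of_sq_eq_of_mem_adjoin_finset hsq T (fun y hy => hS y (hTS hy)) hzT hc

def unitsMulSquares (R K : Type*) [CommRing R] [Field K] [Algebra R K] : Subgroup Kˣ :=
  (Units.map (algebraMap R K : R →* K)).range ⊔ (powMonoidHom 2 : Kˣ →* Kˣ).range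

namespace IsDedekindDomain.HeightOneSpectrum

variable {R K : Type*} [CommRing R] [IsDedekindDomain R] [Field K] [Algebra R K]
  [IsFractionRing R K] (v : HeightOneSpectrum R)

theorem even_toAdd_valuationOfNeZero {x : Kˣ} (hx : x ∈ unitsMulSquares R K) :
    Even (v.valuationOfNeZero x).toAdd := by
  obtain ⟨_, ⟨u, rfl⟩, _, ⟨s, rfl⟩, rfl⟩ := Subgroup.mem_sup.mp hx
  simp only [powMonoidHom_apply, map_mul, valuation_of_unit_eq, one_mul, map_pow, Int.toAdd_pow]
  exact even_two.mul_left _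

theorem notMem_unitsMulSquares_of_odd {x : Kˣ} {k : ℤ} (hk : Odd k)
    (hx : v.valuation K x = Multiplicative.ofAdd k) : x ∉ unitsMulSquares R K := by
  intro hmem
  have hval : v.valuationOfNeZero x = Multiplicative.ofAdd k := by
    rw [← WithZero.coe_inj, valuationOfNeZero_eq, hx]
  have := v.even_toAdd_valuationOfNeZero hmem
  rw [hval, toAdd_ofAdd] at this
  exact Int.not_even_iff_odd.mpr hk this

end IsDedekindDomain.HeightOneSpectrum

theorem stmt18_general (K : Type*) [Field K] [NumberField K] (d : ℕ)
    (q : HeightOneSpectrum (RingOfIntegers K))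
    (hq : ∃ k : ℕ, Odd k ∧ q.intValuation (d : RingOfIntegers K) =
      ((Multiplicative.ofAdd (-(k : ℤ)) : Multiplicative ℤ) : WithZero (Multiplicative ℤ)))
    (r : ℕ) (u : Fin r → (RingOfIntegers K)ˣ) :
    (let Ω := AlgebraicClosure K
     let L : IntermediateField K Ω := IntermediateField.adjoin K
       {x : Ω | ∃ i : Fin r, x ^ 2 =
         algebraMap K Ω (algebraMap (RingOfIntegers K) K ((u i : RingOfIntegers K)))}
     let Kd : IntermediateField K Ω := IntermediateField.adjoin K {x : Ω | x ^ 2 = (d : Ω)}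
     Kd ⊓ L = ⊥ ∧ Module.finrank K ↥(L ⊔ Kd) = 2 * Module.finrank K ↥L) := by
  intro Ω L Kd
  obtain ⟨k, hk, hqd⟩ := hq
  have hval : q.valuation K (d : K) = Multiplicative.ofAdd (-(k : ℤ)) := by
    rw [← map_natCast (algebraMap (𝓞 K) K), q.valuation_of_algebraMap, hqd]
  have hd0 : (d : K) ≠ 0 := (Valuation.ne_zero_iff (q.valuation K)).mp (by simp [hval])
  obtain ⟨x, hx⟩ := IsAlgClosed.exists_pow_nat_eq (d : Ω) two_pos
  have hKd : Kd = K⟮x⟯ := by rw [← adjoin_setOf_sq_eq, hx]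
  have hxK : x ^ 2 = algebraMap K Ω (d : K) := by rw [hx, map_natCast]
  have hdH : Units.mk0 (d : K) hd0 ∉ unitsMulSquares (𝓞 K) K :=
    q.notMem_unitsMulSquares_of_odd (Int.odd_coe_nat k |>.mpr hk).neg hval
  have hxL : x ∉ L := fun hxL =>
    hdH <| mem_of_sq_eq_of_mem_adjoin (H := unitsMulSquares (𝓞 K) K)
      (fun a => Subgroup.mem_sup_right ⟨a, rfl⟩)
      (by rintro _ ⟨i, hi⟩; exact ⟨_, Subgroup.mem_sup_left ⟨u i, rfl⟩, hi⟩) hxL hxK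
  rw [hKd]
  exact ⟨adjoin_sqrt_inf_eq_bot L hxK hxL, finrank_sup_adjoin_sqrt L hxK hxL⟩

/-- Let `d ≥ 3` be odd and not a square in the number field `K`, let `𝔮` be a prime of
`𝒪_K` dividing `d` to an odd power, and let `L = K(√u₁,…,√u_r)` where `u₁,…,u_r` generate
the unit group `𝒪_K^×`.  Then `K(√d) ∩ L = K`, and `L(√d)/L` is a quadratic extension. -/
theorem stmt18 (K : Type*) [Field K] [NumberField K] (d : ℕ) (hd : 3 ≤ d) (hodd : Odd d)
    (hdsq : ¬ ∃ x : K, x ^ 2 = (d : K))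
    (q : HeightOneSpectrum (RingOfIntegers K))
    (hq : ∃ k : ℕ, Odd k ∧ q.intValuation (d : RingOfIntegers K) =
      ((Multiplicative.ofAdd (-(k : ℤ)) : Multiplicative ℤ) : WithZero (Multiplicative ℤ)))
    (r : ℕ) (u : Fin r → (RingOfIntegers K)ˣ)
    (hu : Subgroup.closure (Set.range u) = (⊤ : Subgroup (RingOfIntegers K)ˣ)) :
    (let Ω := AlgebraicClosure K
     let L : IntermediateField K Ω := IntermediateField.adjoin K
       {x : Ω | ∃ i : Fin r, x ^ 2 =
         algebraMap K Ω (algebraMap (RingOfIntegers K) K ((u i : RingOfIntegers K)))}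
     let Kd : IntermediateField K Ω := IntermediateField.adjoin K {x : Ω | x ^ 2 = (d : Ω)}
     Kd ⊓ L = ⊥ ∧ Module.finrank K ↥(L ⊔ Kd) = 2 * Module.finrank K ↥L) :=
  stmt18_general K d q hq r u
end
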